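/- arXiv:2008.13596 — 6 statements merged into one kernel-verified Lean document; each statement's English description precedes it below -/
import Mathlib

section
/- Let φ : [0,∞) → [0,∞) be nondecreasing (s ≤ t implies φ(s) ≤ φ(t)). Suppose there are constants A, B, ε ≥ 0, exponents 0 < β < γ, and R₀ > 0 such that for every 0 < ρ ≤ R ≤ R₀ one has φ(ρ) ≤ A[(ρ/R)^γ + ε] φ(R) + B R^β. Then there exists ε₀ = ε₀(A, γ, β) > 0 such that if ε < ε₀, there is a constant C = C(A, γ, β) ≥ 0 for which φ(ρ) ≤ C[(ρ/R)^β φ(R) + B ρ^β] for all 0 < ρ ≤ R ≤ R₀. -/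
private lemma pow_rpow_comm' (x p : ℝ) (hx : 0 ≤ x) (k : ℕ) :
    (x ^ p) ^ k = ((x ^ k : ℝ)) ^ p := by
  rw [← Real.rpow_natCast (x ^ p) k, ← Real.rpow_mul hx, mul_comm,
    Real.rpow_natCast_mul hx]

/-- **Campanato–Morrey iteration lemma.**
Let `φ : [0,∞) → [0,∞)` be nondecreasing. Suppose there are constants `A, B, ε ≥ 0`,
exponents `0 < β < γ`, and `R₀ > 0` such that for every `0 < ρ ≤ R ≤ R₀` one has
`φ(ρ) ≤ A[(ρ/R)^γ + ε] φ(R) + B R^β`. Then there exists `ε₀ = ε₀(A, γ, β) > 0` such that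
if `ε < ε₀`, there is a constant `C = C(A, γ, β) ≥ 0` for which
`φ(ρ) ≤ C[(ρ/R)^β φ(R) + B ρ^β]` for all `0 < ρ ≤ R ≤ R₀`. -/
theorem statement0 (A β γ R₀ : ℝ) (hA : 0 ≤ A) (hβ : 0 < β) (hβγ : β < γ) (hR₀ : 0 < R₀) :
    ∃ ε₀ > (0 : ℝ), ∃ C ≥ (0 : ℝ),
      ∀ (ε B : ℝ) (φ : ℝ → ℝ),
        0 ≤ ε → ε < ε₀ → 0 ≤ B →
        (∀ s, 0 ≤ s → 0 ≤ φ s) →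
        (∀ s t, 0 ≤ s → s ≤ t → φ s ≤ φ t) →
        (∀ ρ R : ℝ, 0 < ρ → ρ ≤ R → R ≤ R₀ →
          φ ρ ≤ A * ((ρ / R) ^ γ + ε) * φ R + B * R ^ β) →
        ∀ ρ R : ℝ, 0 < ρ → ρ ≤ R → R ≤ R₀ →
          φ ρ ≤ C * ((ρ / R) ^ β * φ R + B * ρ ^ β) := by
  obtain ⟨α, hαdef⟩ : ∃ α : ℝ, α = (β + γ) / 2 := ⟨_, rfl⟩
  have hβα : β < α := by rw [hαdef]; linarith
  have hαγ : α < γ := by rw [hαdef]; linarith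
  have hα0 : 0 < α := hβ.trans hβα
  obtain ⟨e, hedef⟩ : ∃ e : ℝ, e = γ - α := ⟨_, rfl⟩
  have he0 : 0 < e := by rw [hedef]; linarith
  have hA1 : (0:ℝ) < A + 1 := by linarith
  have hc0 : (0:ℝ) < 1 / (2 * (A + 1)) := by positivity
  obtain ⟨τ, hτ0, hτ1, hτec⟩ : ∃ τ : ℝ, 0 < τ ∧ τ < 1 ∧ τ ^ e ≤ 1 / (2 * (A + 1)) := by
    refine ⟨min (1/2) ((1 / (2 * (A + 1))) ^ e⁻¹),
      lt_min (by norm_num) (Real.rpow_pos_of_pos hc0 _),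
      lt_of_le_of_lt (min_le_left _ _) (by norm_num), ?_⟩
    calc (min (1/2) ((1 / (2 * (A + 1))) ^ e⁻¹)) ^ e
        ≤ ((1 / (2 * (A + 1))) ^ e⁻¹) ^ e := by
          apply Real.rpow_le_rpow (le_min (by norm_num) (Real.rpow_pos_of_pos hc0 _).le)
            (min_le_right _ _) he0.le
      _ = 1 / (2 * (A + 1)) := Real.rpow_inv_rpow hc0.le he0.ne'
  obtain ⟨c, hcdef⟩ : ∃ c : ℝ, c = 1 / (2 * (A + 1)) := ⟨_, rfl⟩
  rw [← hcdef] at hτec hc0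
  obtain ⟨a, hadef⟩ : ∃ a : ℝ, a = τ ^ α := ⟨_, rfl⟩
  obtain ⟨b, hbdef⟩ : ∃ b : ℝ, b = τ ^ β := ⟨_, rfl⟩
  have ha0 : 0 < a := hadef ▸ Real.rpow_pos_of_pos hτ0 _
  have hb0 : 0 < b := hbdef ▸ Real.rpow_pos_of_pos hτ0 _
  have hab : a < b := by
    rw [hadef, hbdef]; exact Real.rpow_lt_rpow_of_exponent_gt hτ0 hτ1 hβα
  obtain ⟨S, hSdef⟩ : ∃ S : ℝ, S = (b - a)⁻¹ := ⟨_, rfl⟩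
  have hS0 : 0 < S := hSdef ▸ inv_pos.mpr (by linarith)
  have hSba : S * (b - a) = 1 := hSdef ▸ inv_mul_cancel₀ (by linarith)
  refine ⟨a * c, by positivity, a⁻¹ + S * b⁻¹, by positivity, ?_⟩
  intro ε B φ hε hεε₀ hB hφ0 hφmono hmain ρ R hρ hρR hRR₀
  have hR0 : 0 < R := hρ.trans_le hρR
  -- Key: A * (τ^γ + ε) ≤ a
  have hkey : A * (τ ^ γ + ε) ≤ a := by
    have hAc : A * c ≤ 1 / 2 := by
      rw [hcdef, mul_one_div, div_le_div_iff₀ (by positivity) (by norm_num : (0:ℝ) < 2)]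
      linarith
    have h1 : τ ^ γ = a * τ ^ e := by
      rw [hadef, hedef, ← Real.rpow_add hτ0]; ring_nf
    have h2 : A * τ ^ γ ≤ a / 2 := by
      rw [h1]
      have hτe0 : 0 ≤ τ ^ e := (Real.rpow_pos_of_pos hτ0 _).le
      have t1 : A * τ ^ e ≤ A * c := mul_le_mul_of_nonneg_left hτec hA
      have t2 : (A * τ ^ e) * a ≤ (1 / 2) * a :=
        mul_le_mul_of_nonneg_right (t1.trans hAc) ha0.le
      calc A * (a * τ ^ e) = (A * τ ^ e) * a := by ring
        _ ≤ (1 / 2) * a := t2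
        _ = a / 2 := by ring
    have h3 : A * ε ≤ a / 2 := by
      have t1 : A * ε ≤ A * (a * c) := mul_le_mul_of_nonneg_left hεε₀.le hA
      have t2 : (A * c) * a ≤ (1 / 2) * a :=
        mul_le_mul_of_nonneg_right hAc ha0.le
      calc A * ε ≤ A * (a * c) := t1
        _ = (A * c) * a := by ring
        _ ≤ (1 / 2) * a := t2
        _ = a / 2 := by ring
    have hexp : A * (τ ^ γ + ε) = A * τ ^ γ + A * ε := by ring
    linarith
  -- Iteration
  have hiter : ∀ k : ℕ, φ (τ ^ k * R) ≤ a ^ k * φ R + S * B * b ^ k * R ^ β := by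
    intro k
    induction k with
    | zero =>
      simp only [pow_zero, one_mul]
      have : 0 ≤ S * B * R ^ β := by positivity
      linarith
    | succ k ih =>
      have hτk0 : (0:ℝ) < τ ^ k := pow_pos hτ0 k
      have hτk1 : τ ^ k ≤ 1 := pow_le_one₀ hτ0.le hτ1.le
      have hle : τ ^ (k+1) * R ≤ τ ^ k * R := by
        have : τ ^ (k+1) ≤ τ ^ k := pow_le_pow_of_le_one hτ0.le hτ1.le (by omega)
        nlinarith
      have hRk : τ ^ k * R ≤ R₀ := by nlinarith
      have h1 := hmain (τ ^ (k+1) * R) (τ ^ k * R) (by positivity) hle hRk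
      have hratio : (τ ^ (k+1) * R) / (τ ^ k * R) = τ := by
        rw [pow_succ]
        field_simp
      rw [hratio] at h1
      have hφk : 0 ≤ φ (τ ^ k * R) := hφ0 _ (by positivity)
      have h2 : A * (τ ^ γ + ε) * φ (τ ^ k * R) ≤ a * φ (τ ^ k * R) :=
        mul_le_mul_of_nonneg_right hkey hφk
      have hpow : (τ ^ k * R) ^ β = b ^ k * R ^ β := by
        rw [Real.mul_rpow hτk0.le hR0.le, hbdef, pow_rpow_comm' τ β hτ0.le k]
      have h3 : φ (τ ^ (k+1) * R) ≤ a * φ (τ ^ k * R) + B * (b ^ k * R ^ β) := by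
        rw [← hpow]; linarith
      have h4 : a * φ (τ ^ k * R) ≤ a * (a ^ k * φ R + S * B * b ^ k * R ^ β) :=
        mul_le_mul_of_nonneg_left ih ha0.le
      have hbk : (0:ℝ) ≤ b ^ k * R ^ β := by positivity
      have heq : a * (a ^ k * φ R + S * B * b ^ k * R ^ β) + B * (b ^ k * R ^ β)
          = a ^ (k+1) * φ R + (S * a + 1) * B * (b ^ k * R ^ β) := by ring
      have hSb : S * a + 1 = S * b := by linear_combination -hSba
      have hfin : (S * a + 1) * B * (b ^ k * R ^ β) = S * B * b ^ (k+1) * R ^ β := by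
        rw [hSb, pow_succ]; ring
      calc φ (τ ^ (k+1) * R) ≤ a * (a ^ k * φ R + S * B * b ^ k * R ^ β) + B * (b ^ k * R ^ β) := by
            linarith
        _ = a ^ (k+1) * φ R + (S * a + 1) * B * (b ^ k * R ^ β) := heq
        _ ≤ a ^ (k+1) * φ R + S * B * b ^ (k+1) * R ^ β := by
            rw [← hfin]
  -- choose k with τ^{k+1} < ρ/R ≤ τ^k
  have hρR1 : ρ / R ≤ 1 := div_le_one_of_le₀ hρR hR0.le
  have hρR0 : 0 < ρ / R := div_pos hρ hR0
  have hex : ∃ n : ℕ, τ ^ n < ρ / R := exists_pow_lt_of_lt_one hρR0 hτ1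
  classical
  set n := Nat.find hex with hndef
  have hn_spec : τ ^ n < ρ / R := Nat.find_spec hex
  have hn0 : n ≠ 0 := by
    intro h
    rw [h, pow_zero] at hn_spec
    linarith
  obtain ⟨k, hk⟩ := Nat.exists_eq_succ_of_ne_zero hn0
  have hk_ge : ρ / R ≤ τ ^ k := by
    have := Nat.find_min hex (m := k) (by omega)
    push_neg at this
    exact this
  have hk_lt : τ ^ (k+1) < ρ / R := by simpa [hk] using hn_spec
  have hτk0 : (0:ℝ) < τ ^ k := pow_pos hτ0 k
  have hτk1 : τ ^ k ≤ 1 := pow_le_one₀ hτ0.le hτ1.le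
  -- φ ρ ≤ φ (τ^k R)
  have hρle : ρ ≤ τ ^ k * R := by
    rw [div_le_iff₀ hR0] at hk_ge
    linarith [hk_ge]
  have h5 : φ ρ ≤ φ (τ ^ k * R) := hφmono _ _ hρ.le hρle
  have h6 := hiter k
  -- bounds on a^k and b^k R^β
  have hτkρ : τ ^ k < (ρ / R) / τ := by
    rw [lt_div_iff₀ hτ0]
    calc τ ^ k * τ = τ ^ (k+1) := by rw [pow_succ]
      _ < ρ / R := hk_lt
  have hak : a ^ k ≤ (ρ / R) ^ β / a := by
    have h7 : ((τ ^ k : ℝ)) ^ α ≤ ((ρ / R) / τ) ^ α :=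
      Real.rpow_le_rpow hτk0.le hτkρ.le hα0.le
    have h8 : ((ρ / R) / τ) ^ α = (ρ / R) ^ α / a := by
      rw [Real.div_rpow hρR0.le hτ0.le, hadef]
    have h9 : (ρ / R) ^ α ≤ (ρ / R) ^ β :=
      Real.rpow_le_rpow_of_exponent_ge hρR0 hρR1 hβα.le
    calc a ^ k = ((τ ^ k : ℝ)) ^ α := by rw [hadef, pow_rpow_comm' τ α hτ0.le k]
      _ ≤ (ρ / R) ^ α / a := h8 ▸ h7
      _ ≤ (ρ / R) ^ β / a := by gcongr
  have hbk : b ^ k * R ^ β ≤ ρ ^ β / b := by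
    have h7 : τ ^ k * R < ρ / τ := by
      rw [lt_div_iff₀ hτ0]
      have h := (lt_div_iff₀ hR0).mp hk_lt
      calc τ ^ k * R * τ = τ ^ (k+1) * R := by rw [pow_succ]; ring
        _ < ρ := h
    have h8 : (τ ^ k * R : ℝ) ^ β ≤ (ρ / τ) ^ β :=
      Real.rpow_le_rpow (by positivity) h7.le hβ.le
    have h9 : (τ ^ k * R : ℝ) ^ β = b ^ k * R ^ β := by
      rw [Real.mul_rpow hτk0.le hR0.le, hbdef, pow_rpow_comm' τ β hτ0.le k]
    have h10 : (ρ / τ) ^ β = ρ ^ β / b := by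
      rw [Real.div_rpow hρ.le hτ0.le, hbdef]
    rw [h9, h10] at h8
    exact h8
  -- finish
  have hφR : 0 ≤ φ R := hφ0 _ hR0.le
  have hfin1 : a ^ k * φ R ≤ a⁻¹ * ((ρ / R) ^ β * φ R) := by
    have := mul_le_mul_of_nonneg_right hak hφR
    calc a ^ k * φ R ≤ (ρ / R) ^ β / a * φ R := this
      _ = a⁻¹ * ((ρ / R) ^ β * φ R) := by ring
  have hfin2 : S * B * b ^ k * R ^ β ≤ S * b⁻¹ * (B * ρ ^ β) := by
    have h := mul_le_mul_of_nonneg_left hbk (by positivity : (0:ℝ) ≤ S * B)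
    calc S * B * b ^ k * R ^ β = S * B * (b ^ k * R ^ β) := by ring
      _ ≤ S * B * (ρ ^ β / b) := h
      _ = S * b⁻¹ * (B * ρ ^ β) := by ring
  have hrhs1 : 0 ≤ (ρ / R) ^ β * φ R := by positivity
  have hrhs2 : 0 ≤ B * ρ ^ β := by positivity
  have hCexp : (a⁻¹ + S * b⁻¹) * ((ρ / R) ^ β * φ R + B * ρ ^ β)
      = a⁻¹ * ((ρ / R) ^ β * φ R) + S * b⁻¹ * (B * ρ ^ β)
        + (a⁻¹ * (B * ρ ^ β) + S * b⁻¹ * ((ρ / R) ^ β * φ R)) := by ring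
  have hpos : 0 ≤ a⁻¹ * (B * ρ ^ β) + S * b⁻¹ * ((ρ / R) ^ β * φ R) := by positivity
  calc φ ρ ≤ φ (τ ^ k * R) := h5
    _ ≤ a ^ k * φ R + S * B * b ^ k * R ^ β := h6
    _ ≤ a⁻¹ * ((ρ / R) ^ β * φ R) + S * b⁻¹ * (B * ρ ^ β) := by linarith
    _ ≤ (a⁻¹ + S * b⁻¹) * ((ρ / R) ^ β * φ R + B * ρ ^ β) := by
        rw [hCexp]; linarith
end

section
/- Let β ≥ 0 and let σ : (0,1) → (0,∞) be differentiable such that |σ'(r)/σ(r) − 1/r| ≤ β and e^{−β(1−r)} r ≤ σ(r) ≤ e^{β(1−r)} r for every r ∈ (0,1). Then the limit α := lim_{r→0⁺} σ(r)/r exists, satisfies e^{−β} ≤ α ≤ e^{β} (in particular α > 0), and one has the quantitative estimate |σ(r)/r − α| ≤ β e^{β} r for every r ∈ (0,1). -/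
/-!
Put `f r = σ r / r`. Its logarithmic derivative is `σ'/σ - 1/r`, so `|f'| ≤ β f ≤ β e^β` by the
upper bound on `σ`, and `f` is `β e^β`-Lipschitz on `(0,1)`. A Lipschitz function on `(0,1)`
extends to a Lipschitz function on `ℝ`; its value `α` at `0` is the limit of `f` at `0⁺`,
`|f r - α| ≤ β e^β r` is the Lipschitz estimate between `r` and `0`, and the bounds on `α` are
the limits of the bounds on `f`.
-/

open Set Filter Topology
open scoped NNReal

theorem LipschitzOnWith.exists_tendsto_nhdsGT_and_dist_le {f : ℝ → ℝ} {a b : ℝ} {K : ℝ≥0}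
    (hf : LipschitzOnWith K f (Ioo a b)) (hab : a < b) :
    ∃ α, Tendsto f (𝓝[>] a) (𝓝 α) ∧ ∀ r ∈ Ioo a b, dist (f r) α ≤ K * (r - a) := by
  obtain ⟨g, hg, hfg⟩ := hf.extend_real
  refine ⟨g a, ?_, fun r hr => ?_⟩
  · have hfg' : g =ᶠ[𝓝[>] a] f := eventually_of_mem (Ioo_mem_nhdsGT hab) fun r hr => (hfg hr).symm
    exact ((hg.continuous.tendsto a).mono_left nhdsWithin_le_nhds).congr' hfg'
  · rw [hfg hr, ← abs_of_pos (sub_pos.2 hr.1), ← Real.dist_eq]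
    exact hg.dist_le_mul r a

theorem HasDerivAt.div_id_logDeriv {σ : ℝ → ℝ} {s r : ℝ} (h : HasDerivAt σ s r)
    (hσ : σ r ≠ 0) (hr : r ≠ 0) :
    HasDerivAt (fun x => σ x / x) (σ r / r * (s / σ r - 1 / r)) r :=
  (h.div (hasDerivAt_id' r) hr).congr_deriv (by field_simp)

theorem tendsto_exp_mul_one_sub_nhdsGT_zero (c : ℝ) :
    Tendsto (fun r => Real.exp (c * (1 - r))) (𝓝[>] 0) (𝓝 (Real.exp c)) := by
  have hcont : Continuous fun r : ℝ => Real.exp (c * (1 - r)) := by fun_prop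
  simpa using (hcont.tendsto 0).mono_left nhdsWithin_le_nhds

theorem lipschitzOnWith_div_id_of_abs_logDeriv_sub_le {β : ℝ} (hβ : 0 ≤ β) {σ σ' : ℝ → ℝ}
    (hpos : ∀ r ∈ Ioo (0 : ℝ) 1, 0 < σ r)
    (hderiv : ∀ r ∈ Ioo (0 : ℝ) 1, HasDerivAt σ (σ' r) r)
    (hlog : ∀ r ∈ Ioo (0 : ℝ) 1, |σ' r / σ r - 1 / r| ≤ β)
    (hupper : ∀ r ∈ Ioo (0 : ℝ) 1, σ r ≤ Real.exp (β * (1 - r)) * r) :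
    LipschitzOnWith (β * Real.exp β).toNNReal (fun r => σ r / r) (Ioo 0 1) := by
  refine (convex_Ioo 0 1).lipschitzOnWith_of_nnnorm_hasDerivWithin_le
    (fun r hr => ((hderiv r hr).div_id_logDeriv (hpos r hr).ne' hr.1.ne').hasDerivWithinAt)
    fun r hr => ?_
  rw [Real.le_toNNReal_iff_coe_le (by positivity), coe_nnnorm, Real.norm_eq_abs,
    abs_mul, abs_of_pos (div_pos (hpos r hr) hr.1), mul_comm β]
  have hquot : σ r / r ≤ Real.exp β := by
    rw [div_le_iff₀ hr.1]
    refine (hupper r hr).trans (mul_le_mul_of_nonneg_right (Real.exp_le_exp.2 ?_) hr.1.le)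
    nlinarith [hr.1]
  exact mul_le_mul hquot (hlog r hr) (abs_nonneg _) (Real.exp_pos β).le

/-- Let `β ≥ 0` and let `σ : (0,1) → (0,∞)` be differentiable such that
`|σ'(r)/σ(r) − 1/r| ≤ β` and `e^{−β(1−r)} r ≤ σ(r) ≤ e^{β(1−r)} r` for every `r ∈ (0,1)`.
Then the limit `α := lim_{r→0⁺} σ(r)/r` exists, satisfies `e^{−β} ≤ α ≤ e^{β}` (in
particular `α > 0`), and `|σ(r)/r − α| ≤ β e^{β} r` for every `r ∈ (0,1)`. -/
theorem statement4 (β : ℝ) (hβ : 0 ≤ β) (σ σ' : ℝ → ℝ)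
    (hpos : ∀ r ∈ Set.Ioo (0 : ℝ) 1, 0 < σ r)
    (hderiv : ∀ r ∈ Set.Ioo (0 : ℝ) 1, HasDerivAt σ (σ' r) r)
    (hlog : ∀ r ∈ Set.Ioo (0 : ℝ) 1, |σ' r / σ r - 1 / r| ≤ β)
    (hbounds : ∀ r ∈ Set.Ioo (0 : ℝ) 1,
        Real.exp (-β * (1 - r)) * r ≤ σ r ∧ σ r ≤ Real.exp (β * (1 - r)) * r) :
    ∃ α : ℝ,
      Filter.Tendsto (fun r => σ r / r) (nhdsWithin 0 (Set.Ioi 0)) (nhds α) ∧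
      Real.exp (-β) ≤ α ∧ α ≤ Real.exp β ∧ 0 < α ∧
      ∀ r ∈ Set.Ioo (0 : ℝ) 1, |σ r / r - α| ≤ β * Real.exp β * r := by
  have hlip := lipschitzOnWith_div_id_of_abs_logDeriv_sub_le hβ hpos hderiv hlog
    fun r hr => (hbounds r hr).2
  obtain ⟨α, hlim, hdist⟩ := hlip.exists_tendsto_nhdsGT_and_dist_le zero_lt_one
  have hnear : ∀ᶠ r in 𝓝[>] (0 : ℝ), r ∈ Ioo (0 : ℝ) 1 := Ioo_mem_nhdsGT one_pos
  have hlower : Real.exp (-β) ≤ α :=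
    le_of_tendsto_of_tendsto (tendsto_exp_mul_one_sub_nhdsGT_zero (-β)) hlim <|
      hnear.mono fun r hr => (le_div_iff₀ hr.1).2 (hbounds r hr).1
  have hupper : α ≤ Real.exp β :=
    le_of_tendsto_of_tendsto hlim (tendsto_exp_mul_one_sub_nhdsGT_zero β) <|
      hnear.mono fun r hr => (div_le_iff₀ hr.1).2 (hbounds r hr).2
  refine ⟨α, hlim, hlower, hupper, (Real.exp_pos _).trans_le hlower, fun r hr => ?_⟩
  simpa [Real.dist_eq, Real.coe_toNNReal _ (by positivity : 0 ≤ β * Real.exp β)]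
    using hdist r hr
end

section
/- Let n ≥ 1 be an integer, a ∈ (-1,1) and L ≥ 0. Let B : ℝⁿ → Sym_n(ℝ) be L-Lipschitz (symmetric n×n matrix-valued) with B(0) = Id_n, and for x ∈ ℝⁿ let A(x) ∈ Sym_{n+1}(ℝ) be the block-diagonal matrix with blocks B(x) and 1. For X = (x,y) ∈ ℝⁿ × ℝ with X ≠ 0 and y ≠ 0, define the vector field V(X) = |y|^a A(x) (X/|X|). Then there exists a constant C = C(n, L, a) > 0 such that at every point X = (x,y) with 0 < |X| ≤ 1 and y ≠ 0 at which B is differentiable at x, the vector field V is differentiable at X and | div V(X) − (n+a) |y|^a / |X| | ≤ C |y|^a. -/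
/-!
Write `V = φ • F` with `φ(x, y) = |y|^a / |X|` and `F(x, y) = (B(x) x, y)`, so that
`div V = φ div F + ⟪∇φ, F⟫`. Here `∇φ = φ (a/y e_{n+1} - X / |X|²)` and
`div F = tr B(x) + ∑ᵢ (∂ᵢB(x) x)ᵢ + 1`, and `|X|² = |x|² + y²` turns this into
`div V - (n + a) φ = φ ((tr B(x) - n) + ∑ᵢ (∂ᵢB(x) x)ᵢ - ⟪x, (B(x) - 1) x⟫ / |X|²)`.
As `B` is `L`-Lipschitz with `B(0) = 1`, we have `‖B(x) - 1‖ ≤ L|x|` and `‖DB(x)‖ ≤ L`, so the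
bracket is at most `(2n + 1) L |x| ≤ (2n + 1) L |X|`.
-/

open scoped RealInnerProductSpace
open ContinuousLinearMap

section Radial

variable {E : Type*} [NormedAddCommGroup E] [InnerProductSpace ℝ E]

/-- `⟪(x, y), ·⟫` for the Euclidean structure of `E × ℝ` (not the one of its `Prod` norm). -/
noncomputable def prodInnerSL (x : E) (y : ℝ) : E × ℝ →L[ℝ] ℝ :=
  (innerSL ℝ x).comp (fst ℝ E ℝ) + y • snd ℝ E ℝ

@[simp] lemma prodInnerSL_apply (x : E) (y : ℝ) (v : E × ℝ) :
    prodInnerSL x y v = ⟪x, v.1⟫ + y * v.2 := rfl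

lemma hasFDerivAt_normSq_add_sq (x : E) (y : ℝ) :
    HasFDerivAt (fun X : E × ℝ => ‖X.1‖ ^ 2 + X.2 ^ 2) ((2 : ℝ) • prodInnerSL x y) (x, y) := by
  refine ((hasFDerivAt_fst (𝕜 := ℝ) (p := (x, y))).norm_sq.add
    ((hasFDerivAt_snd (𝕜 := ℝ) (p := (x, y))).pow 2)).congr_fderiv ?_
  ext v <;> simp

lemma hasFDerivAt_sqrt_normSq_add_sq {x : E} {y : ℝ} (h : 0 < ‖x‖ ^ 2 + y ^ 2) :
    HasFDerivAt (fun X : E × ℝ => √(‖X.1‖ ^ 2 + X.2 ^ 2))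
      ((√(‖x‖ ^ 2 + y ^ 2))⁻¹ • prodInnerSL x y) (x, y) := by
  refine ((hasFDerivAt_normSq_add_sq x y).sqrt h.ne').congr_fderiv ?_
  rw [smul_smul]
  congr 1
  field_simp

lemma hasDerivAt_abs_rpow_of_ne_zero {y : ℝ} (hy : y ≠ 0) (a : ℝ) :
    HasDerivAt (fun t : ℝ => |t| ^ a) (a * |y| ^ a / y) y := by
  refine ((Real.hasDerivAt_rpow_const (Or.inl (abs_ne_zero.mpr hy))).comp y
    (hasDerivAt_abs hy)).congr_deriv ?_
  rw [Real.rpow_sub_one (abs_ne_zero.mpr hy)]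
  rcases hy.lt_or_gt with h | h <;> simp [h, abs_of_neg, abs_of_pos] <;> field_simp

lemma hasFDerivAt_abs_rpow_div_sqrt (a : ℝ) (x : E) {y : ℝ} (hy : y ≠ 0) :
    HasFDerivAt (fun X : E × ℝ => |X.2| ^ a / √(‖X.1‖ ^ 2 + X.2 ^ 2))
      ((|y| ^ a / √(‖x‖ ^ 2 + y ^ 2)) •
        ((a / y) • snd ℝ E ℝ - (‖x‖ ^ 2 + y ^ 2)⁻¹ • prodInnerSL x y)) (x, y) := by
  have hq : 0 < ‖x‖ ^ 2 + y ^ 2 := by positivity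
  have hr : 0 < √(‖x‖ ^ 2 + y ^ 2) := Real.sqrt_pos.mpr hq
  have hnum := (hasDerivAt_abs_rpow_of_ne_zero hy a).comp_hasFDerivAt (x, y)
    (hasFDerivAt_snd (𝕜 := ℝ) (p := (x, y)))
  have hden := (hasDerivAt_inv hr.ne').comp_hasFDerivAt (x, y)
    (hasFDerivAt_sqrt_normSq_add_sq hq)
  refine (hnum.mul hden).congr_fderiv ?_
  ext v <;> simp [Real.sq_sqrt hq.le] <;> ring

lemma hasFDerivAt_apply_self_prod {F : Type*} [NormedAddCommGroup F] [NormedSpace ℝ F]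
    {B : E → E →L[ℝ] F} {x : E} (hB : DifferentiableAt ℝ B x) (y : ℝ) :
    HasFDerivAt (fun X : E × ℝ => (B X.1 X.1, X.2))
      ((B x + (fderiv ℝ B x).flip x).comp (fst ℝ E ℝ) |>.prod (snd ℝ E ℝ)) (x, y) := by
  have hfst := hasFDerivAt_fst (𝕜 := ℝ) (p := (x, y))
  refine (((hB.hasFDerivAt.comp (x, y) hfst).clm_apply hfst).prodMk
    (hasFDerivAt_snd (p := (x, y)))).congr_fderiv ?_
  ext v <;> simp

lemma abs_inner_apply_self_sub_le (T : E →L[ℝ] E) (x : E) :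
    |⟪x, T x⟫ - ‖x‖ ^ 2| ≤ ‖T - 1‖ * ‖x‖ ^ 2 := by
  have h : ⟪x, T x⟫ - ‖x‖ ^ 2 = ⟪x, (T - 1) x⟫ := by
    rw [sub_apply, inner_sub_right, one_apply_eq_self, real_inner_self_eq_norm_sq]
  rw [h]
  calc |⟪x, (T - 1) x⟫| ≤ ‖x‖ * ‖(T - 1) x‖ := abs_real_inner_le_norm _ _
    _ ≤ ‖x‖ * (‖T - 1‖ * ‖x‖) := by gcongr; exact le_opNorm _ _
    _ = ‖T - 1‖ * ‖x‖ ^ 2 := by ring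

end Radial

section Euclidean

variable {n : ℕ}

local notation "ℝⁿ" => EuclideanSpace ℝ (Fin n)

/-- The trace in the standard basis of `ℝⁿ × ℝ`: on `DV(X)` it is the divergence of `V` at `X`. -/
noncomputable def prodTrace (n : ℕ) :
    ((EuclideanSpace ℝ (Fin n) × ℝ) →L[ℝ] (EuclideanSpace ℝ (Fin n) × ℝ)) →ₗ[ℝ] ℝ where
  toFun D := ∑ i, (D (EuclideanSpace.single i 1, 0)).1 i + (D (0, 1)).2
  map_add' D D' := by simp only [add_apply, Prod.fst_add, Prod.snd_add, PiLp.add_apply,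
    Finset.sum_add_distrib]; ring
  map_smul' c D := by simp [mul_add, Finset.mul_sum]

lemma prodTrace_smulRight (ℓ : ℝⁿ × ℝ →L[ℝ] ℝ) (v : ℝⁿ × ℝ) :
    prodTrace n (ℓ.smulRight v) = ℓ v := by
  have hv : v = ∑ i, v.1 i • (EuclideanSpace.single i 1, 0) + v.2 • (0, 1) := by
    ext <;> simp [Prod.fst_sum, Prod.snd_sum, Pi.single_apply]
  conv_rhs => rw [hv]
  simp only [map_add, map_sum, map_smul, smul_eq_mul]
  simp [prodTrace, mul_comm]

lemma prodTrace_prod (T : ℝⁿ × ℝ →L[ℝ] ℝⁿ) (u : ℝⁿ × ℝ →L[ℝ] ℝ) :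
    prodTrace n (T.prod u) = ∑ i, T (EuclideanSpace.single i 1, 0) i + u (0, 1) := rfl

lemma abs_sum_apply_single_le (T : ℝⁿ →L[ℝ] ℝⁿ) :
    |∑ i, T (EuclideanSpace.single i 1) i| ≤ n * ‖T‖ := by
  calc |∑ i, T (EuclideanSpace.single i 1) i| ≤ ∑ i : Fin n, ‖T‖ := by
        refine (Finset.abs_sum_le_sum_abs _ _).trans (Finset.sum_le_sum fun i _ => ?_)
        calc |T (EuclideanSpace.single i 1) i| ≤ ‖T (EuclideanSpace.single i 1)‖ :=
              (Real.norm_eq_abs _).symm.trans_le (PiLp.norm_apply_le _ i)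
          _ ≤ ‖T‖ := T.le_of_opNorm_le le_rfl _ |>.trans (by simp)
    _ = n * ‖T‖ := by simp

lemma abs_sum_apply_single_sub_le (T : ℝⁿ →L[ℝ] ℝⁿ) :
    |∑ i, T (EuclideanSpace.single i 1) i - n| ≤ n * ‖T - 1‖ := by
  convert abs_sum_apply_single_le (T - 1) using 2
  simp [Finset.sum_sub_distrib]

lemma prodTrace_fderiv_weighted_field (a : ℝ) {B : ℝⁿ → ℝⁿ →L[ℝ] ℝⁿ} {x : ℝⁿ}
    (hB : DifferentiableAt ℝ B x) {y : ℝ} (hy : y ≠ 0) :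
    prodTrace n (fderiv ℝ
        (fun X : ℝⁿ × ℝ => (|X.2| ^ a / √(‖X.1‖ ^ 2 + X.2 ^ 2)) • (B X.1 X.1, X.2)) (x, y)) =
      |y| ^ a / √(‖x‖ ^ 2 + y ^ 2) *
        (∑ i, B x (EuclideanSpace.single i 1) i + ∑ i, fderiv ℝ B x (EuclideanSpace.single i 1) x i
          + 1 + a - (⟪x, B x x⟫ + y ^ 2) / (‖x‖ ^ 2 + y ^ 2)) := by
  have hV : HasFDerivAt
      (fun X : ℝⁿ × ℝ => (|X.2| ^ a / √(‖X.1‖ ^ 2 + X.2 ^ 2)) • (B X.1 X.1, X.2)) _ (x, y) :=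
    (hasFDerivAt_abs_rpow_div_sqrt a x hy).smul (hasFDerivAt_apply_self_prod hB y)
  rw [hV.fderiv, map_add, map_smul, prodTrace_smulRight, prodTrace_prod]
  have hq : ‖x‖ ^ 2 + y ^ 2 ≠ 0 := by positivity
  simp [Finset.sum_add_distrib]
  field_simp
  ring

lemma abs_prodTrace_fderiv_weighted_field_sub_le (a : ℝ) {L : ℝ} {B : ℝⁿ → ℝⁿ →L[ℝ] ℝⁿ} {x : ℝⁿ}
    (hB : DifferentiableAt ℝ B x) (hB1 : ‖B x - 1‖ ≤ L * ‖x‖) (hDB : ‖fderiv ℝ B x‖ ≤ L)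
    {y : ℝ} (hy : y ≠ 0) :
    |prodTrace n (fderiv ℝ
        (fun X : ℝⁿ × ℝ => (|X.2| ^ a / √(‖X.1‖ ^ 2 + X.2 ^ 2)) • (B X.1 X.1, X.2)) (x, y))
      - (n + a) * |y| ^ a / √(‖x‖ ^ 2 + y ^ 2)| ≤ (2 * n + 1) * L * |y| ^ a := by
  rw [prodTrace_fderiv_weighted_field a hB hy]
  set q := ‖x‖ ^ 2 + y ^ 2
  set r := √q
  set s := |y| ^ a
  set t := ∑ i, B x (EuclideanSpace.single i 1) i
  set σ := ∑ i, fderiv ℝ B x (EuclideanSpace.single i 1) x i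
  set ι := ⟪x, B x x⟫
  have hq : 0 < q := by positivity
  have hr : 0 < r := Real.sqrt_pos.mpr hq
  have hxr : ‖x‖ ≤ r := Real.le_sqrt_of_sq_le (le_add_of_nonneg_right (sq_nonneg y))
  have hxq : ‖x‖ ^ 2 ≤ q := le_add_of_nonneg_right (sq_nonneg y)
  have hL : 0 ≤ L := (norm_nonneg (fderiv ℝ B x)).trans hDB
  have ht : |t - n| ≤ n * (L * ‖x‖) :=
    (abs_sum_apply_single_sub_le (B x)).trans (by gcongr)
  have hσ : |σ| ≤ n * (L * ‖x‖) := by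
    refine (abs_sum_apply_single_le ((fderiv ℝ B x).flip x)).trans ?_
    gcongr
    calc ‖(fderiv ℝ B x).flip x‖ ≤ ‖(fderiv ℝ B x).flip‖ * ‖x‖ := le_opNorm _ _
      _ ≤ L * ‖x‖ := by rw [opNorm_flip]; gcongr
  have hι : |ι - ‖x‖ ^ 2| / q ≤ L * ‖x‖ := by
    rw [div_le_iff₀ hq]
    calc |ι - ‖x‖ ^ 2| ≤ ‖B x - 1‖ * ‖x‖ ^ 2 := abs_inner_apply_self_sub_le (B x) x
      _ ≤ L * ‖x‖ * q := by gcongr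
  have hsplit : s / r * (t + σ + 1 + a - (ι + y ^ 2) / q) - (n + a) * s / r
      = s / r * ((t - n) + σ - (ι - ‖x‖ ^ 2) / q) := by
    field_simp
    ring
  have hbracket : |(t - n) + σ - (ι - ‖x‖ ^ 2) / q| ≤ (2 * n + 1) * L * r :=
    calc |(t - n) + σ - (ι - ‖x‖ ^ 2) / q| ≤ |(t - n) + σ| + |(ι - ‖x‖ ^ 2) / q| := abs_sub _ _
      _ ≤ |t - n| + |σ| + |ι - ‖x‖ ^ 2| / q := by
          rw [abs_div, abs_of_pos hq]
          gcongr
          exact abs_add_le _ _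
      _ ≤ (2 * n + 1) * L * ‖x‖ := by linarith
      _ ≤ (2 * n + 1) * L * r := by gcongr
  rw [hsplit, abs_mul, abs_of_nonneg (by positivity : 0 ≤ s / r)]
  calc s / r * |(t - n) + σ - (ι - ‖x‖ ^ 2) / q| ≤ s / r * ((2 * n + 1) * L * r) := by gcongr
    _ = (2 * n + 1) * L * s := by field_simp

end Euclidean

theorem statement5_general (n : ℕ) (a L : ℝ)
    (hL : 0 ≤ L)
    (B : EuclideanSpace ℝ (Fin n) → (EuclideanSpace ℝ (Fin n) →L[ℝ] EuclideanSpace ℝ (Fin n)))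
    (hLip : ∀ x x', ‖B x - B x'‖ ≤ L * ‖x - x'‖)
    (hB0 : B 0 = ContinuousLinearMap.id ℝ (EuclideanSpace ℝ (Fin n))) :
    ∃ C > (0 : ℝ), ∀ (x : EuclideanSpace ℝ (Fin n)) (y : ℝ),
      0 < Real.sqrt (‖x‖ ^ 2 + y ^ 2) → Real.sqrt (‖x‖ ^ 2 + y ^ 2) ≤ 1 → y ≠ 0 →
      DifferentiableAt ℝ B x →
      (DifferentiableAt ℝ
          (fun X : EuclideanSpace ℝ (Fin n) × ℝ =>
            (|X.2| ^ a / Real.sqrt (‖X.1‖ ^ 2 + X.2 ^ 2)) • (B X.1 X.1, X.2)) (x, y)) ∧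
      |((∑ i : Fin n,
            (fderiv ℝ
                (fun X : EuclideanSpace ℝ (Fin n) × ℝ =>
                  (|X.2| ^ a / Real.sqrt (‖X.1‖ ^ 2 + X.2 ^ 2)) • (B X.1 X.1, X.2)) (x, y)
              ((EuclideanSpace.single i (1 : ℝ)), (0 : ℝ))).1 i)
          + (fderiv ℝ
                (fun X : EuclideanSpace ℝ (Fin n) × ℝ =>
                  (|X.2| ^ a / Real.sqrt (‖X.1‖ ^ 2 + X.2 ^ 2)) • (B X.1 X.1, X.2)) (x, y)
              ((0 : EuclideanSpace ℝ (Fin n)), (1 : ℝ))).2)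
        - ((n : ℝ) + a) * |y| ^ a / Real.sqrt (‖x‖ ^ 2 + y ^ 2)| ≤ C * |y| ^ a := by
  have hLipB : LipschitzWith ⟨L, hL⟩ B :=
    LipschitzWith.of_dist_le_mul fun x x' => by
      rw [dist_eq_norm, dist_eq_norm]; exact hLip x x'
  refine ⟨(2 * n + 1) * L + 1, by positivity, fun x y _ _ hy hB => ⟨?_, ?_⟩⟩
  · exact ((hasFDerivAt_abs_rpow_div_sqrt a x hy).smul
      (hasFDerivAt_apply_self_prod hB y)).differentiableAt
  have hB1 : ‖B x - 1‖ ≤ L * ‖x‖ := by simpa [hB0, one_def] using hLip x 0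
  calc _ ≤ (2 * n + 1) * L * |y| ^ a :=
        abs_prodTrace_fderiv_weighted_field_sub_le a hB hB1 (norm_fderiv_le_of_lipschitz ℝ hLipB) hy
    _ ≤ ((2 * n + 1) * L + 1) * |y| ^ a := by gcongr; linarith

/-- Let `n ≥ 1`, `a ∈ (−1,1)`, `L ≥ 0`. Let `B : ℝⁿ → Sym_n(ℝ)` be `L`-Lipschitz with
`B(0) = Id`, and let `A(x)` be block diagonal with blocks `B(x)` and `1`, acting on
`ℝⁿ × ℝ` by `A(x)(u,t) = (B(x)u, t)`. For `X = (x,y)` with `X ≠ 0`, `y ≠ 0` define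
`V(X) = |y|^a A(x) (X/|X|)`, where `|X| = (|x|² + y²)^{1/2}`. Then there is
`C = C(n,L,a) > 0` such that at every point `X = (x,y)` with `0 < |X| ≤ 1`, `y ≠ 0`
at which `B` is differentiable at `x`, the field `V` is differentiable at `X` and
`|div V(X) − (n+a)|y|^a/|X|| ≤ C |y|^a`. -/
theorem statement5 (n : ℕ) (hn : 1 ≤ n) (a L : ℝ) (ha : a ∈ Set.Ioo (-1 : ℝ) 1)
    (hL : 0 ≤ L)
    (B : EuclideanSpace ℝ (Fin n) → (EuclideanSpace ℝ (Fin n) →L[ℝ] EuclideanSpace ℝ (Fin n)))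
    (hsym : ∀ x u v, ⟪B x u, v⟫ = ⟪u, B x v⟫)
    (hLip : ∀ x x', ‖B x - B x'‖ ≤ L * ‖x - x'‖)
    (hB0 : B 0 = ContinuousLinearMap.id ℝ (EuclideanSpace ℝ (Fin n))) :
    ∃ C > (0 : ℝ), ∀ (x : EuclideanSpace ℝ (Fin n)) (y : ℝ),
      0 < Real.sqrt (‖x‖ ^ 2 + y ^ 2) → Real.sqrt (‖x‖ ^ 2 + y ^ 2) ≤ 1 → y ≠ 0 →
      DifferentiableAt ℝ B x →
      (DifferentiableAt ℝ
          (fun X : EuclideanSpace ℝ (Fin n) × ℝ =>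
            (|X.2| ^ a / Real.sqrt (‖X.1‖ ^ 2 + X.2 ^ 2)) • (B X.1 X.1, X.2)) (x, y)) ∧
      |((∑ i : Fin n,
            (fderiv ℝ
                (fun X : EuclideanSpace ℝ (Fin n) × ℝ =>
                  (|X.2| ^ a / Real.sqrt (‖X.1‖ ^ 2 + X.2 ^ 2)) • (B X.1 X.1, X.2)) (x, y)
              ((EuclideanSpace.single i (1 : ℝ)), (0 : ℝ))).1 i)
          + (fderiv ℝ
                (fun X : EuclideanSpace ℝ (Fin n) × ℝ =>
                  (|X.2| ^ a / Real.sqrt (‖X.1‖ ^ 2 + X.2 ^ 2)) • (B X.1 X.1, X.2)) (x, y)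
              ((0 : EuclideanSpace ℝ (Fin n)), (1 : ℝ))).2)
        - ((n : ℝ) + a) * |y| ^ a / Real.sqrt (‖x‖ ^ 2 + y ^ 2)| ≤ C * |y| ^ a :=
  statement5_general n a L hL B hLip hB0
end

section
/- Let n ≥ 1 be an integer, L ≥ 0 and λ > 0. Let B : ℝⁿ → Sym_n(ℝ) be L-Lipschitz with B(0) = Id_n, and for x ∈ ℝⁿ let A(x) ∈ Sym_{n+1}(ℝ) be the block-diagonal matrix with blocks B(x) and 1; assume furthermore that ⟨A(x)ξ, ξ⟩ ≥ λ|ξ|² for every x ∈ ℝⁿ and ξ ∈ ℝ^{n+1}. For X = (x,y) ∈ ℝ^{n+1} with X ≠ 0, set μ̃(X) = ⟨A(x)X, X⟩ / |X|² and Z(X) = A(x)X / μ̃(X). Then there is a constant C = C(n, L, λ) > 0 such that at every X = (x,y) with 0 < |X| ≤ 1 at which B is differentiable at x, the map Z is differentiable at X, the operator norm of DZ(X) − Id_{n+1} is at most C|X|, and | div Z(X) − (n+1) | ≤ C |X|. -/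
/-!
Write `Z = s • g` with `g X = A(x) X = (B x x, y)` and `s = μ̃⁻¹ = |X|² / ⟪A(x) X, X⟫`, so that
`DZ - I = s • (Dg - I) + (s - 1) • I + Ds ⊗ g`. Since `B 0 = I` and `B` is `L`-Lipschitz,
`‖B x - I‖ ≤ L |x|` and `‖DB‖ ≤ L`, hence `Dg - I = O(|X|)`, while the defect
`|X|² - ⟪A(x) X, X⟫ = ⟪x - B x x, x⟫` is `O(|X|³)` with derivative `O(|X|²)`. Together with
ellipticity `⟪A(x) X, X⟫ ≥ λ |X|²` this gives `s - 1 = O(|X|)`, `Ds = O(1)` and `g = O(|X|)`.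
The divergence is the trace of `DZ`, which differs from `n + 1` by at most `(n + 1) ‖DZ - I‖`.
Operator norms are taken for the sup norm on `E × ℝ`, whereas `|X| = √(‖x‖² + y²)`.
-/

open scoped RealInnerProductSpace
open ContinuousLinearMap (fst snd opNorm_le_bound opNorm_smul_le le_opNorm le_opNorm₂ comp_apply
  coe_fst' coe_snd' norm_smulRight_apply)

section Calculus

variable {F : Type*} [NormedAddCommGroup F] [NormedSpace ℝ F]

theorem HasFDerivAt.fun_div {c d : F → ℝ} {c' d' : F →L[ℝ] ℝ} {X : F}
    (hc : HasFDerivAt c c' X) (hd : HasFDerivAt d d' X) (hX : d X ≠ 0) :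
    HasFDerivAt (fun Y => c Y / d Y) ((d X ^ 2)⁻¹ • (d X • c' - c X • d')) X := by
  have h := hc.fun_mul ((hasDerivAt_inv hX).comp_hasFDerivAt X hd)
  simp only [Function.comp_def, ← div_eq_mul_inv] at h
  refine h.congr_fderiv ?_
  ext V
  simp only [neg_smul, smul_neg, add_apply, neg_apply, smul_apply, smul_eq_mul, sub_apply]
  field_simp
  ring

theorem norm_smul_add_smulRight_sub_id_le (c : ℝ) (T : F →L[ℝ] F) (ℓ : F →L[ℝ] ℝ) (v : F) :
    ‖c • T + ℓ.smulRight v - ContinuousLinearMap.id ℝ F‖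
      ≤ |c| * ‖T - ContinuousLinearMap.id ℝ F‖ + |c - 1| + ‖ℓ‖ * ‖v‖ := by
  have h : c • T + ℓ.smulRight v - ContinuousLinearMap.id ℝ F
      = c • (T - ContinuousLinearMap.id ℝ F) + (c - 1) • ContinuousLinearMap.id ℝ F
        + ℓ.smulRight v := by
    module
  rw [h]
  refine (norm_add₃_le).trans (add_le_add (add_le_add ?_ ?_) (norm_smulRight_apply ℓ v).le)
  · exact (opNorm_smul_le _ _).trans_eq (by rw [Real.norm_eq_abs])
  · refine (opNorm_smul_le _ _).trans ?_
    rw [Real.norm_eq_abs]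
    exact mul_le_of_le_one_right (abs_nonneg _) ContinuousLinearMap.norm_id_le

theorem norm_prod_snd_sub_id_le {G : Type*} [NormedAddCommGroup G] [NormedSpace ℝ G]
    (T : F × G →L[ℝ] F) :
    ‖T.prod (snd ℝ F G) - ContinuousLinearMap.id ℝ (F × G)‖ ≤ ‖T - fst ℝ F G‖ := by
  refine opNorm_le_bound _ (norm_nonneg _) fun V => ?_
  have h : (T.prod (snd ℝ F G) - ContinuousLinearMap.id ℝ (F × G)) V
      = ((T - fst ℝ F G) V, 0) := by
    ext <;> simp
  rw [h, norm_prod_le_iff]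
  refine ⟨le_opNorm _ _, ?_⟩
  simp only [norm_zero]
  positivity

end Calculus

theorem le_sqrt_sq_add_sq (a b : ℝ) : a ≤ √(a ^ 2 + b ^ 2) :=
  Real.le_sqrt_of_sq_le (le_add_of_nonneg_right (sq_nonneg b))

theorem abs_le_sqrt_sq_add_sq (a b : ℝ) : |b| ≤ √(a ^ 2 + b ^ 2) :=
  Real.abs_le_sqrt (le_add_of_nonneg_left (sq_nonneg a))

noncomputable section RellichField

variable {E : Type*} [NormedAddCommGroup E] [InnerProductSpace ℝ E]

def rayleighQuotient (B : E → E →L[ℝ] E) (X : E × ℝ) : ℝ :=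
  (⟪B X.1 X.1, X.1⟫ + X.2 ^ 2) / (‖X.1‖ ^ 2 + X.2 ^ 2)

def rellichField (B : E → E →L[ℝ] E) (X : E × ℝ) : E × ℝ :=
  (rayleighQuotient B X)⁻¹ • (B X.1 X.1, X.2)

variable {B : E → E →L[ℝ] E} {B' : E →L[ℝ] E →L[ℝ] E} {L : ℝ} {x : E}

theorem norm_sub_apply_self_le (hBx : ‖B x - ContinuousLinearMap.id ℝ E‖ ≤ L * ‖x‖) :
    ‖x - B x x‖ ≤ L * ‖x‖ ^ 2 := by
  have h : x - B x x = -(B x - ContinuousLinearMap.id ℝ E) x := by simp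
  rw [h, norm_neg, pow_two, ← mul_assoc]
  exact (B x - ContinuousLinearMap.id ℝ E).le_of_opNorm_le hBx x

theorem abs_inner_sub_apply_self_le (hBx : ‖B x - ContinuousLinearMap.id ℝ E‖ ≤ L * ‖x‖) :
    |⟪x - B x x, x⟫| ≤ L * ‖x‖ ^ 3 :=
  calc |⟪x - B x x, x⟫| ≤ ‖x - B x x‖ * ‖x‖ := abs_real_inner_le_norm _ _
    _ ≤ L * ‖x‖ ^ 2 * ‖x‖ := by gcongr; exact norm_sub_apply_self_le hBx
    _ = L * ‖x‖ ^ 3 := by ring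

theorem norm_fderiv_apply_self_sub_fst_le (hBx : ‖B x - ContinuousLinearMap.id ℝ E‖ ≤ L * ‖x‖)
    (hB' : ‖B'‖ ≤ L) :
    ‖(B x).comp (fst ℝ E ℝ) + (B'.comp (fst ℝ E ℝ)).flip x - fst ℝ E ℝ‖ ≤ 2 * L * ‖x‖ := by
  have hL : 0 ≤ L := (norm_nonneg B').trans hB'
  refine opNorm_le_bound _ (by positivity) fun V => ?_
  have hV : ‖V.1‖ ≤ ‖V‖ := norm_fst_le V
  have h : ((B x).comp (fst ℝ E ℝ) + (B'.comp (fst ℝ E ℝ)).flip x - fst ℝ E ℝ) V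
      = (B x - ContinuousLinearMap.id ℝ E) V.1 + B' V.1 x := by
    simp only [sub_apply, add_apply, comp_apply, coe_fst', ContinuousLinearMap.flip_apply,
      ContinuousLinearMap.id_apply]
    abel
  rw [h]
  calc ‖(B x - ContinuousLinearMap.id ℝ E) V.1 + B' V.1 x‖
      ≤ ‖B x - ContinuousLinearMap.id ℝ E‖ * ‖V.1‖ + ‖B'‖ * ‖V.1‖ * ‖x‖ :=
        norm_add_le_of_le (le_opNorm _ _) (le_opNorm₂ _ _ _)
    _ ≤ L * ‖x‖ * ‖V‖ + L * ‖V‖ * ‖x‖ := by gcongr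
    _ = 2 * L * ‖x‖ * ‖V‖ := by ring

theorem hasFDerivAt_apply_self (hB : HasFDerivAt B B' x) (y : ℝ) :
    HasFDerivAt (fun X : E × ℝ => B X.1 X.1)
      ((B x).comp (fst ℝ E ℝ) + (B'.comp (fst ℝ E ℝ)).flip x) (x, y) :=
  have hfst : HasFDerivAt (fun X : E × ℝ => X.1) (fst ℝ E ℝ) (x, y) := hasFDerivAt_fst
  (hB.comp (x, y) hfst).clm_apply hfst

theorem exists_hasFDerivAt_inner_sub_apply_self (hB : HasFDerivAt B B' x)
    (hBx : ‖B x - ContinuousLinearMap.id ℝ E‖ ≤ L * ‖x‖) (hB' : ‖B'‖ ≤ L) (y : ℝ) :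
    ∃ r' : E × ℝ →L[ℝ] ℝ, HasFDerivAt (fun X : E × ℝ => ⟪X.1 - B X.1 X.1, X.1⟫) r' (x, y) ∧
      ‖r'‖ ≤ 3 * L * ‖x‖ ^ 2 := by
  have hL : 0 ≤ L := (norm_nonneg B').trans hB'
  set T := (B x).comp (fst ℝ E ℝ) + (B'.comp (fst ℝ E ℝ)).flip x
  refine ⟨_, (hasFDerivAt_fst.sub (hasFDerivAt_apply_self hB y)).inner ℝ hasFDerivAt_fst, ?_⟩
  refine opNorm_le_bound _ (by positivity) fun V => ?_
  have hT : ‖T V - V.1‖ ≤ 2 * L * ‖x‖ * ‖V‖ := by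
    simpa using (T - fst ℝ E ℝ).le_of_opNorm_le (norm_fderiv_apply_self_sub_fst_le hBx hB') V
  show |⟪x - B x x, V.1⟫ + ⟪V.1 - T V, x⟫| ≤ 3 * L * ‖x‖ ^ 2 * ‖V‖
  calc |⟪x - B x x, V.1⟫ + ⟪V.1 - T V, x⟫|
      ≤ ‖x - B x x‖ * ‖V.1‖ + ‖T V - V.1‖ * ‖x‖ := by
        rw [norm_sub_rev (T V)]
        exact (abs_add_le _ _).trans
          (add_le_add (abs_real_inner_le_norm _ _) (abs_real_inner_le_norm _ _))
    _ ≤ L * ‖x‖ ^ 2 * ‖V‖ + 2 * L * ‖x‖ * ‖V‖ * ‖x‖ := by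
        gcongr
        · exact norm_sub_apply_self_le hBx
        · exact norm_fst_le V
    _ = 3 * L * ‖x‖ ^ 2 * ‖V‖ := by ring

theorem exists_hasFDerivAt_norm_sq_add_sq (x : E) (y : ℝ) :
    ∃ N' : E × ℝ →L[ℝ] ℝ, HasFDerivAt (fun X : E × ℝ => ‖X.1‖ ^ 2 + X.2 ^ 2) N' (x, y) ∧
      ‖N'‖ ≤ 2 * (‖x‖ + |y|) := by
  have h := (hasFDerivAt_fst (p := (x, y)) (𝕜 := ℝ)).norm_sq.add
    (hasFDerivAt_snd (p := (x, y)) (𝕜 := ℝ)).norm_sq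
  simp only [Real.norm_eq_abs, sq_abs] at h
  refine ⟨_, h, opNorm_le_bound _ (by positivity) fun V => ?_⟩
  simp only [add_apply, comp_apply, smul_apply, coe_fst', coe_snd',
    nsmul_eq_mul, Nat.cast_ofNat]
  calc |2 * ⟪x, V.1⟫ + 2 * ⟪y, V.2⟫| ≤ 2 * |⟪x, V.1⟫| + 2 * |⟪y, V.2⟫| := by
        simpa only [abs_mul, abs_two] using abs_add_le (2 * ⟪x, V.1⟫) (2 * ⟪y, V.2⟫)
    _ ≤ 2 * (‖x‖ * ‖V‖) + 2 * (‖y‖ * ‖V‖) := by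
        gcongr
        · exact (abs_real_inner_le_norm _ _).trans (by gcongr; exact norm_fst_le V)
        · exact (abs_real_inner_le_norm _ _).trans (by gcongr; exact norm_snd_le V)
    _ = 2 * (‖x‖ + |y|) * ‖V‖ := by rw [Real.norm_eq_abs]; ring

variable {y lam : ℝ}

theorem le_rayleighQuotient (hN : 0 < ‖x‖ ^ 2 + y ^ 2)
    (hq : lam * (‖x‖ ^ 2 + y ^ 2) ≤ ⟪B x x, x⟫ + y ^ 2) : lam ≤ rayleighQuotient B (x, y) :=
  (le_div_iff₀ hN).2 hq

theorem rayleighQuotient_sub_one (hN : 0 < ‖x‖ ^ 2 + y ^ 2) :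
    rayleighQuotient B (x, y) - 1 = -⟪x - B x x, x⟫ / (‖x‖ ^ 2 + y ^ 2) := by
  rw [rayleighQuotient, inner_sub_left, real_inner_self_eq_norm_sq]
  field_simp
  ring

theorem abs_rayleighQuotient_sub_one_le (hL : 0 ≤ L)
    (hBx : ‖B x - ContinuousLinearMap.id ℝ E‖ ≤ L * ‖x‖) (hN : 0 < ‖x‖ ^ 2 + y ^ 2) :
    |rayleighQuotient B (x, y) - 1| ≤ L * √(‖x‖ ^ 2 + y ^ 2) := by
  have hx := le_sqrt_sq_add_sq ‖x‖ y
  set ε := √(‖x‖ ^ 2 + y ^ 2)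
  have hε : ‖x‖ ^ 2 + y ^ 2 = ε ^ 2 := (Real.sq_sqrt hN.le).symm
  rw [rayleighQuotient_sub_one hN, abs_div, abs_neg, abs_of_pos hN, div_le_iff₀ hN, hε]
  calc |⟪x - B x x, x⟫| ≤ L * ‖x‖ ^ 3 := abs_inner_sub_apply_self_le hBx
    _ ≤ L * ε ^ 3 := by gcongr
    _ = L * ε * ε ^ 2 := by ring

theorem hasFDerivAt_inv_rayleighQuotient {N' r' : E × ℝ →L[ℝ] ℝ}
    (hN' : HasFDerivAt (fun X : E × ℝ => ‖X.1‖ ^ 2 + X.2 ^ 2) N' (x, y))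
    (hr' : HasFDerivAt (fun X : E × ℝ => ⟪X.1 - B X.1 X.1, X.1⟫) r' (x, y))
    (hq : ⟪B x x, x⟫ + y ^ 2 ≠ 0) :
    HasFDerivAt (fun X => (rayleighQuotient B X)⁻¹)
      (((⟪B x x, x⟫ + y ^ 2) ^ 2)⁻¹ • ((‖x‖ ^ 2 + y ^ 2) • r' - ⟪x - B x x, x⟫ • N')) (x, y) := by
  have hqr : ∀ X : E × ℝ,
      ‖X.1‖ ^ 2 + X.2 ^ 2 - ⟪X.1 - B X.1 X.1, X.1⟫ = ⟪B X.1 X.1, X.1⟫ + X.2 ^ 2 := fun X => by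
    rw [inner_sub_left, real_inner_self_eq_norm_sq]; ring
  have hqr₀ : ‖x‖ ^ 2 + y ^ 2 - ⟪x - B x x, x⟫ = ⟪B x x, x⟫ + y ^ 2 := hqr (x, y)
  have h := HasFDerivAt.fun_div hN' (hN'.fun_sub hr') (hqr₀.trans_ne hq)
  simp only [hqr] at h
  refine (h.congr_fderiv (by rw [← hqr₀]; module)).congr_of_eventuallyEq
    (.of_eq (funext fun X => ?_))
  rw [rayleighQuotient, inv_div]

theorem exists_hasFDerivAt_inv_rayleighQuotient (hlam : 0 < lam)
    (hB : HasFDerivAt B B' x) (hBx : ‖B x - ContinuousLinearMap.id ℝ E‖ ≤ L * ‖x‖)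
    (hB' : ‖B'‖ ≤ L) (hN : 0 < ‖x‖ ^ 2 + y ^ 2)
    (hq : lam * (‖x‖ ^ 2 + y ^ 2) ≤ ⟪B x x, x⟫ + y ^ 2) :
    ∃ s' : E × ℝ →L[ℝ] ℝ, HasFDerivAt (fun X => (rayleighQuotient B X)⁻¹) s' (x, y) ∧
      ‖s'‖ ≤ 7 * L / lam ^ 2 := by
  have hL : 0 ≤ L := (norm_nonneg B').trans hB'
  obtain ⟨N', hN', hN'le⟩ := exists_hasFDerivAt_norm_sq_add_sq x y
  obtain ⟨r', hr', hr'le⟩ := exists_hasFDerivAt_inner_sub_apply_self hB hBx hB' y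
  have hx := le_sqrt_sq_add_sq ‖x‖ y
  have hy := abs_le_sqrt_sq_add_sq ‖x‖ y
  set ε := √(‖x‖ ^ 2 + y ^ 2)
  have hε : ‖x‖ ^ 2 + y ^ 2 = ε ^ 2 := (Real.sq_sqrt hN.le).symm
  have hεpos : 0 < ε := Real.sqrt_pos.2 hN
  rw [hε] at hq
  have hqpos : 0 < ⟪B x x, x⟫ + y ^ 2 := (by positivity : 0 < lam * ε ^ 2).trans_le hq
  refine ⟨_, hasFDerivAt_inv_rayleighQuotient hN' hr' hqpos.ne', ?_⟩
  have hr : ‖⟪x - B x x, x⟫‖ ≤ L * ε ^ 3 :=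
    (abs_inner_sub_apply_self_le hBx).trans (by gcongr)
  have hnum : ‖(‖x‖ ^ 2 + y ^ 2) • r' - ⟪x - B x x, x⟫ • N'‖ ≤ 7 * L * ε ^ 4 :=
    calc ‖(‖x‖ ^ 2 + y ^ 2) • r' - ⟪x - B x x, x⟫ • N'‖
        ≤ ‖‖x‖ ^ 2 + y ^ 2‖ * ‖r'‖ + ‖⟪x - B x x, x⟫‖ * ‖N'‖ :=
          (norm_sub_le ((‖x‖ ^ 2 + y ^ 2) • r') (⟪x - B x x, x⟫ • N')).trans
            (add_le_add (opNorm_smul_le _ _) (opNorm_smul_le _ _))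
      _ ≤ ε ^ 2 * (3 * L * ε ^ 2) + L * ε ^ 3 * (2 * (ε + ε)) := by
          rw [Real.norm_of_nonneg hN.le, hε]
          gcongr
          · exact hr'le.trans (by gcongr)
          · exact hN'le.trans (by gcongr)
      _ = 7 * L * ε ^ 4 := by ring
  calc _ ≤ ‖((⟪B x x, x⟫ + y ^ 2) ^ 2)⁻¹‖ * ‖(‖x‖ ^ 2 + y ^ 2) • r' - ⟪x - B x x, x⟫ • N'‖ :=
        opNorm_smul_le _ _
    _ ≤ ((lam * ε ^ 2) ^ 2)⁻¹ * (7 * L * ε ^ 4) := by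
        rw [norm_inv, norm_pow, Real.norm_of_nonneg hqpos.le]
        gcongr
    _ = 7 * L / lam ^ 2 := by field_simp

theorem norm_apply_self_prod_le (hL : 0 ≤ L) (hBx : ‖B x - ContinuousLinearMap.id ℝ E‖ ≤ L * ‖x‖)
    (hN1 : √(‖x‖ ^ 2 + y ^ 2) ≤ 1) : ‖(B x x, y)‖ ≤ (1 + L) * √(‖x‖ ^ 2 + y ^ 2) := by
  have hx := le_sqrt_sq_add_sq ‖x‖ y
  have hy := abs_le_sqrt_sq_add_sq ‖x‖ y
  set ε := √(‖x‖ ^ 2 + y ^ 2)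
  have hε0 : 0 ≤ ε := Real.sqrt_nonneg _
  refine norm_prod_le_iff.2 ⟨?_, (Real.norm_eq_abs y).trans_le ?_⟩
  · calc ‖B x x‖ ≤ ‖x‖ + ‖x - B x x‖ := norm_sub_rev (B x x) x ▸ norm_le_insert' (B x x) x
      _ ≤ ε + L * ε ^ 2 := by gcongr; exact (norm_sub_apply_self_le hBx).trans (by gcongr)
      _ ≤ ε + L * ε := by gcongr; nlinarith
      _ = (1 + L) * ε := by ring
  · exact hy.trans (le_mul_of_one_le_left hε0 (by linarith))

theorem abs_inv_rayleighQuotient_sub_one_le (hL : 0 ≤ L) (hlam : 0 < lam)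
    (hBx : ‖B x - ContinuousLinearMap.id ℝ E‖ ≤ L * ‖x‖) (hN : 0 < ‖x‖ ^ 2 + y ^ 2)
    (hq : lam * (‖x‖ ^ 2 + y ^ 2) ≤ ⟪B x x, x⟫ + y ^ 2) :
    |(rayleighQuotient B (x, y))⁻¹ - 1| ≤ L / lam * √(‖x‖ ^ 2 + y ^ 2) := by
  have hμ := le_rayleighQuotient hN hq
  have hμpos : 0 < rayleighQuotient B (x, y) := hlam.trans_le hμ
  rw [show (rayleighQuotient B (x, y))⁻¹ - 1
      = -(rayleighQuotient B (x, y) - 1) / rayleighQuotient B (x, y) by field_simp; ring,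
    abs_div, abs_neg, abs_of_pos hμpos, div_le_iff₀ hμpos]
  calc _ ≤ L * √(‖x‖ ^ 2 + y ^ 2) := abs_rayleighQuotient_sub_one_le hL hBx hN
    _ = L / lam * √(‖x‖ ^ 2 + y ^ 2) * lam := by field_simp
    _ ≤ L / lam * √(‖x‖ ^ 2 + y ^ 2) * rayleighQuotient B (x, y) := by gcongr

theorem exists_hasFDerivAt_rellichField (hlam : 0 < lam)
    (hB : HasFDerivAt B B' x) (hBx : ‖B x - ContinuousLinearMap.id ℝ E‖ ≤ L * ‖x‖)
    (hB' : ‖B'‖ ≤ L) (hN : 0 < ‖x‖ ^ 2 + y ^ 2) (hN1 : √(‖x‖ ^ 2 + y ^ 2) ≤ 1)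
    (hq : lam * (‖x‖ ^ 2 + y ^ 2) ≤ ⟪B x x, x⟫ + y ^ 2) :
    ∃ D : E × ℝ →L[ℝ] E × ℝ, HasFDerivAt (rellichField B) D (x, y) ∧
      ‖D - ContinuousLinearMap.id ℝ (E × ℝ)‖
        ≤ (3 * L / lam + 7 * L * (1 + L) / lam ^ 2) * √(‖x‖ ^ 2 + y ^ 2) := by
  have hL : 0 ≤ L := (norm_nonneg B').trans hB'
  obtain ⟨s', hs', hs'le⟩ := exists_hasFDerivAt_inv_rayleighQuotient hlam hB hBx hB' hN hq
  have hg := (hasFDerivAt_apply_self hB y).prodMk (hasFDerivAt_snd (p := (x, y)) (𝕜 := ℝ))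
  refine ⟨_, hs'.smul hg, (norm_smul_add_smulRight_sub_id_le _ _ _ _).trans ?_⟩
  have hμ := le_rayleighQuotient hN hq
  have hinv : |(rayleighQuotient B (x, y))⁻¹| ≤ lam⁻¹ := by
    rw [abs_inv, abs_of_pos (hlam.trans_le hμ)]
    exact inv_anti₀ hlam hμ
  have hDg : ‖((B x).comp (fst ℝ E ℝ) + (B'.comp (fst ℝ E ℝ)).flip x).prod (snd ℝ E ℝ) -
      ContinuousLinearMap.id ℝ (E × ℝ)‖ ≤ 2 * L * √(‖x‖ ^ 2 + y ^ 2) :=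
    (norm_prod_snd_sub_id_le _).trans ((norm_fderiv_apply_self_sub_fst_le hBx hB').trans
      (by gcongr; exact le_sqrt_sq_add_sq ‖x‖ y))
  have hinv_sub := abs_inv_rayleighQuotient_sub_one_le hL hlam hBx hN hq
  have hg_le := norm_apply_self_prod_le hL hBx hN1
  set ε := √(‖x‖ ^ 2 + y ^ 2)
  calc _ ≤ lam⁻¹ * (2 * L * ε) + L / lam * ε + 7 * L / lam ^ 2 * ((1 + L) * ε) := by
        gcongr
    _ = (3 * L / lam + 7 * L * (1 + L) / lam ^ 2) * ε := by ring

end RellichField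

theorem abs_sum_diag_sub_le {n : ℕ}
    (T : EuclideanSpace ℝ (Fin n) × ℝ →L[ℝ] EuclideanSpace ℝ (Fin n) × ℝ) :
    |(∑ i, (T (EuclideanSpace.single i 1, 0)).1 i) + (T (0, 1)).2 - (n + 1)|
      ≤ (n + 1) * ‖T - ContinuousLinearMap.id ℝ _‖ := by
  set S := T - ContinuousLinearMap.id ℝ _ with hS
  have hunit : ∀ V, ‖V‖ ≤ 1 → ‖S V‖ ≤ ‖S‖ := fun V hV =>
    (S.le_opNorm_of_le hV).trans_eq (mul_one _)
  have hdiag : ∀ i : Fin n, |(T (EuclideanSpace.single i 1, 0)).1 i - 1| ≤ ‖S‖ := by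
    intro i
    have h : (T (EuclideanSpace.single i 1, 0)).1 i - 1
        = (S (EuclideanSpace.single i 1, 0)).1 i := by simp [hS]
    rw [h, ← Real.norm_eq_abs]
    exact (PiLp.norm_apply_le _ i).trans ((norm_fst_le _).trans (hunit _ (by simp [Prod.norm_def])))
  have hlast : |(T (0, 1)).2 - 1| ≤ ‖S‖ := by
    have h : (T (0, 1)).2 - 1 = (S (0, 1)).2 := by simp [hS]
    rw [h, ← Real.norm_eq_abs]
    exact (norm_snd_le _).trans (hunit _ (by simp [Prod.norm_def]))
  calc |(∑ i, (T (EuclideanSpace.single i 1, 0)).1 i) + (T (0, 1)).2 - (n + 1)|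
      = |∑ i, ((T (EuclideanSpace.single i 1, 0)).1 i - 1) + ((T (0, 1)).2 - 1)| := by
        rw [Finset.sum_sub_distrib]
        simp only [Finset.sum_const, Finset.card_univ, Fintype.card_fin, nsmul_eq_mul, mul_one]
        ring_nf
    _ ≤ ∑ i, |(T (EuclideanSpace.single i 1, 0)).1 i - 1| + |(T (0, 1)).2 - 1| :=
        (abs_add_le _ _).trans (add_le_add_left (Finset.abs_sum_le_sum_abs _ _) _)
    _ ≤ ∑ _i : Fin n, ‖S‖ + ‖S‖ := by gcongr with i; exact hdiag i
    _ = (n + 1) * ‖S‖ := by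
        simp only [Finset.sum_const, Finset.card_univ, Fintype.card_fin, nsmul_eq_mul]
        ring

theorem statement7_general (n : ℕ) (L lam : ℝ) (hL : 0 ≤ L) (hlam : 0 < lam)
    (B : EuclideanSpace ℝ (Fin n) → (EuclideanSpace ℝ (Fin n) →L[ℝ] EuclideanSpace ℝ (Fin n)))
    (hLip : ∀ x x', ‖B x - B x'‖ ≤ L * ‖x - x'‖)
    (hB0 : B 0 = ContinuousLinearMap.id ℝ (EuclideanSpace ℝ (Fin n)))
    (hell : ∀ (x u : EuclideanSpace ℝ (Fin n)) (t : ℝ),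
        lam * (‖u‖ ^ 2 + t ^ 2) ≤ ⟪B x u, u⟫ + t ^ 2) :
    ∃ C > (0 : ℝ), ∀ (x : EuclideanSpace ℝ (Fin n)) (y : ℝ),
      0 < Real.sqrt (‖x‖ ^ 2 + y ^ 2) → Real.sqrt (‖x‖ ^ 2 + y ^ 2) ≤ 1 →
      DifferentiableAt ℝ B x →
      (DifferentiableAt ℝ
          (fun X : EuclideanSpace ℝ (Fin n) × ℝ =>
            (((⟪B X.1 X.1, X.1⟫ + X.2 ^ 2) / (‖X.1‖ ^ 2 + X.2 ^ 2))⁻¹) •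
              (B X.1 X.1, X.2)) (x, y)) ∧
      ‖fderiv ℝ
          (fun X : EuclideanSpace ℝ (Fin n) × ℝ =>
            (((⟪B X.1 X.1, X.1⟫ + X.2 ^ 2) / (‖X.1‖ ^ 2 + X.2 ^ 2))⁻¹) •
              (B X.1 X.1, X.2)) (x, y)
          - ContinuousLinearMap.id ℝ (EuclideanSpace ℝ (Fin n) × ℝ)‖
        ≤ C * Real.sqrt (‖x‖ ^ 2 + y ^ 2) ∧
      |((∑ i : Fin n,
            (fderiv ℝ
                (fun X : EuclideanSpace ℝ (Fin n) × ℝ =>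
                  (((⟪B X.1 X.1, X.1⟫ + X.2 ^ 2) / (‖X.1‖ ^ 2 + X.2 ^ 2))⁻¹) •
                    (B X.1 X.1, X.2)) (x, y)
              ((EuclideanSpace.single i (1 : ℝ)), (0 : ℝ))).1 i)
          + (fderiv ℝ
                (fun X : EuclideanSpace ℝ (Fin n) × ℝ =>
                  (((⟪B X.1 X.1, X.1⟫ + X.2 ^ 2) / (‖X.1‖ ^ 2 + X.2 ^ 2))⁻¹) •
                    (B X.1 X.1, X.2)) (x, y)
              ((0 : EuclideanSpace ℝ (Fin n)), (1 : ℝ))).2)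
        - ((n : ℝ) + 1)| ≤ C * Real.sqrt (‖x‖ ^ 2 + y ^ 2) := by
  set C₀ := 3 * L / lam + 7 * L * (1 + L) / lam ^ 2
  have hC₀ : 0 ≤ C₀ := by positivity
  refine ⟨(n + 1) * (C₀ + 1), by positivity, fun x y hε0 hε1 hBd => ?_⟩
  have hBx : ‖B x - ContinuousLinearMap.id ℝ _‖ ≤ L * ‖x‖ := by simpa [hB0] using hLip x 0
  have hB' : ‖fderiv ℝ B x‖ ≤ L := by
    have h := norm_fderiv_le_of_lipschitz ℝ (x₀ := x)
      (LipschitzWith.of_dist_le' (f := B) fun a b => by simpa [dist_eq_norm] using hLip a b)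
    rwa [Real.coe_toNNReal L hL] at h
  obtain ⟨D, hD, hDle⟩ := exists_hasFDerivAt_rellichField hlam hBd.hasFDerivAt hBx hB'
    (Real.sqrt_pos.1 hε0) hε1 (hell x x y)
  unfold rellichField rayleighQuotient at hD
  rw [hD.fderiv]
  have hC : C₀ * √(‖x‖ ^ 2 + y ^ 2) ≤ (n + 1) * (C₀ + 1) * √(‖x‖ ^ 2 + y ^ 2) := by
    gcongr
    nlinarith
  refine ⟨hD.differentiableAt, hDle.trans hC, (abs_sum_diag_sub_le D).trans ?_⟩
  calc (n + 1) * ‖D - ContinuousLinearMap.id ℝ _‖ ≤ (n + 1) * (C₀ * √(‖x‖ ^ 2 + y ^ 2)) := by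
        gcongr
    _ ≤ (n + 1) * (C₀ + 1) * √(‖x‖ ^ 2 + y ^ 2) := by rw [← mul_assoc]; gcongr; linarith

/-- Let `n ≥ 1`, `L ≥ 0`, `λ > 0`. Let `B : ℝⁿ → Sym_n(ℝ)` be `L`-Lipschitz with
`B(0) = Id`, let `A(x)` be block diagonal with blocks `B(x)` and `1` (so that
`A(x)(u,t) = (B(x)u, t)` on `ℝⁿ × ℝ`), and assume `⟨A(x)ξ, ξ⟩ ≥ λ|ξ|²` for all `x, ξ`.
For `X = (x,y) ≠ 0` set `μ̃(X) = ⟨A(x)X, X⟩/|X|²` and `Z(X) = A(x)X / μ̃(X)`, where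
`|X| = (|x|² + y²)^{1/2}`. Then there is `C = C(n,L,λ) > 0` such that at every `X` with
`0 < |X| ≤ 1` at which `B` is differentiable at `x`, the map `Z` is differentiable at
`X`, `‖DZ(X) − Id‖ ≤ C|X|`, and `|div Z(X) − (n+1)| ≤ C|X|`. -/
theorem statement7 (n : ℕ) (hn : 1 ≤ n) (L lam : ℝ) (hL : 0 ≤ L) (hlam : 0 < lam)
    (B : EuclideanSpace ℝ (Fin n) → (EuclideanSpace ℝ (Fin n) →L[ℝ] EuclideanSpace ℝ (Fin n)))
    (hsym : ∀ x u v, ⟪B x u, v⟫ = ⟪u, B x v⟫)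
    (hLip : ∀ x x', ‖B x - B x'‖ ≤ L * ‖x - x'‖)
    (hB0 : B 0 = ContinuousLinearMap.id ℝ (EuclideanSpace ℝ (Fin n)))
    (hell : ∀ (x u : EuclideanSpace ℝ (Fin n)) (t : ℝ),
        lam * (‖u‖ ^ 2 + t ^ 2) ≤ ⟪B x u, u⟫ + t ^ 2) :
    ∃ C > (0 : ℝ), ∀ (x : EuclideanSpace ℝ (Fin n)) (y : ℝ),
      0 < Real.sqrt (‖x‖ ^ 2 + y ^ 2) → Real.sqrt (‖x‖ ^ 2 + y ^ 2) ≤ 1 →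
      DifferentiableAt ℝ B x →
      (DifferentiableAt ℝ
          (fun X : EuclideanSpace ℝ (Fin n) × ℝ =>
            (((⟪B X.1 X.1, X.1⟫ + X.2 ^ 2) / (‖X.1‖ ^ 2 + X.2 ^ 2))⁻¹) •
              (B X.1 X.1, X.2)) (x, y)) ∧
      ‖fderiv ℝ
          (fun X : EuclideanSpace ℝ (Fin n) × ℝ =>
            (((⟪B X.1 X.1, X.1⟫ + X.2 ^ 2) / (‖X.1‖ ^ 2 + X.2 ^ 2))⁻¹) •
              (B X.1 X.1, X.2)) (x, y)
          - ContinuousLinearMap.id ℝ (EuclideanSpace ℝ (Fin n) × ℝ)‖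
        ≤ C * Real.sqrt (‖x‖ ^ 2 + y ^ 2) ∧
      |((∑ i : Fin n,
            (fderiv ℝ
                (fun X : EuclideanSpace ℝ (Fin n) × ℝ =>
                  (((⟪B X.1 X.1, X.1⟫ + X.2 ^ 2) / (‖X.1‖ ^ 2 + X.2 ^ 2))⁻¹) •
                    (B X.1 X.1, X.2)) (x, y)
              ((EuclideanSpace.single i (1 : ℝ)), (0 : ℝ))).1 i)
          + (fderiv ℝ
                (fun X : EuclideanSpace ℝ (Fin n) × ℝ =>
                  (((⟪B X.1 X.1, X.1⟫ + X.2 ^ 2) / (‖X.1‖ ^ 2 + X.2 ^ 2))⁻¹) •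
                    (B X.1 X.1, X.2)) (x, y)
              ((0 : EuclideanSpace ℝ (Fin n)), (1 : ℝ))).2)
        - ((n : ℝ) + 1)| ≤ C * Real.sqrt (‖x‖ ^ 2 + y ^ 2) :=
  statement7_general n L lam hL hlam B hLip hB0 hell
end

section
/- Let n ≥ 1 be an integer, a ∈ (−1,1), and let Ω ⊆ ℝⁿ × (0,∞) be open. Let b_{ij} : ℝⁿ → ℝ (1 ≤ i,j ≤ n) be C¹ functions with b_{ij} = b_{ji}, let f : ℝⁿ → ℝ be any function, and let V : Ω → ℝ be of class C³ satisfying Σ_{i,j=1}^n ∂_{x_i}( b_{ij}(x) ∂_{x_j}V(x,y) ) + ∂_{yy}V(x,y) + (a/y) ∂_y V(x,y) = f(x) for every (x,y) ∈ Ω. Then the function w(x,y) := y^a ∂_y V(x,y) satisfies the conjugate equation Σ_{i,j=1}^n ∂_{x_i}( b_{ij}(x) ∂_{x_j}w(x,y) ) + ∂_{yy}w(x,y) − (a/y) ∂_y w(x,y) = 0 for every (x,y) ∈ Ω. -/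
/-!
Differentiate the equation in `y`. Since `b` and `f` do not depend on `y`, the vertical derivative
commutes with the horizontal operator `L = Σ ∂ᵢ (bᵢⱼ ∂ⱼ ·)` (symmetry of second derivatives), so
`u = ∂_y V` solves `L u + u_yy + (a/y) u_y - (a/y²) u = 0`. For `w = y^a u`, `L w = y^a L u`,
while `w_yy - (a/y) w_y = y^a (u_yy + (a/y) u_y - (a/y²) u)`; the sum is `y^a · 0`.
-/

open Filter Topology

section DirDeriv

variable {E : Type*} [NormedAddCommGroup E] [NormedSpace ℝ E]

noncomputable def dirDeriv (v : E) (g : E → ℝ) (q : E) : ℝ := fderiv ℝ g q v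

theorem ContDiffAt.dirDeriv {g : E → ℝ} {p : E} {m n : ℕ} (h : ContDiffAt ℝ n g p)
    (hmn : m + 1 ≤ n) (v : E) : ContDiffAt ℝ m (dirDeriv v g) p :=
  (h.fderiv_right (by exact_mod_cast hmn)).clm_apply contDiffAt_const

theorem Filter.EventuallyEq.dirDeriv_eq {f g : E → ℝ} {p : E} (h : f =ᶠ[𝓝 p] g) (v : E) :
    dirDeriv v f p = dirDeriv v g p := by
  simp only [_root_.dirDeriv, h.fderiv_eq]

theorem dirDeriv_add {f g : E → ℝ} {p : E} (hf : DifferentiableAt ℝ f p)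
    (hg : DifferentiableAt ℝ g p) (v : E) :
    dirDeriv v (fun q => f q + g q) p = dirDeriv v f p + dirDeriv v g p := by
  simp [_root_.dirDeriv, fderiv_fun_add hf hg]

theorem dirDeriv_comm {g : E → ℝ} {p : E} (h : ContDiffAt ℝ 2 g p) (v w : E) :
    dirDeriv v (dirDeriv w g) p = dirDeriv w (dirDeriv v g) p := by
  have hd : DifferentiableAt ℝ (fderiv ℝ g) p :=
    (h.fderiv_right (m := 1) le_rfl).differentiableAt one_ne_zero
  have happly (u : E) :
      fderiv ℝ (fun q => fderiv ℝ g q u) p = (fderiv ℝ (fderiv ℝ g) p).flip u := by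
    simpa using fderiv_clm_apply hd (differentiableAt_const u)
  change fderiv ℝ (fun q => fderiv ℝ g q w) p v = fderiv ℝ (fun q => fderiv ℝ g q v) p w
  rw [happly, happly, ContinuousLinearMap.flip_apply, ContinuousLinearMap.flip_apply]
  exact (h.isSymmSndFDerivAt (by simp)).eq v w

theorem dirDeriv_comm_eventuallyEq {g : E → ℝ} {p : E} (h : ContDiffAt ℝ 2 g p) (v w : E) :
    dirDeriv v (dirDeriv w g) =ᶠ[𝓝 p] dirDeriv w (dirDeriv v g) :=
  (h.eventually (by simp)).mono fun _ hq => dirDeriv_comm hq v w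

end DirDeriv

section HalfSpace

variable {F : Type*} [NormedAddCommGroup F] [NormedSpace ℝ F]

theorem dirDeriv_mul_comp_fst {c : F → ℝ} {g : F × ℝ → ℝ} {q : F × ℝ}
    (hc : DifferentiableAt ℝ c q.1) (hg : DifferentiableAt ℝ g q) (u : F) :
    dirDeriv (u, 0) (fun q => c q.1 * g q) q =
      fderiv ℝ c q.1 u * g q + c q.1 * dirDeriv (u, 0) g q := by
  have hc' : HasFDerivAt (fun q : F × ℝ => c q.1)
      ((fderiv ℝ c q.1).comp (ContinuousLinearMap.fst ℝ F ℝ)) q :=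
    hc.hasFDerivAt.comp q hasFDerivAt_fst
  rw [dirDeriv, (hc'.fun_mul hg.hasFDerivAt).fderiv]
  simp only [add_apply, smul_apply, smul_eq_mul,
    ContinuousLinearMap.comp_apply, ContinuousLinearMap.coe_fst', dirDeriv]
  ring

theorem dirDeriv_mul_comp_snd {φ : ℝ → ℝ} {φ' : ℝ} {g : F × ℝ → ℝ} {q : F × ℝ}
    (hφ : HasDerivAt φ φ' q.2) (hg : DifferentiableAt ℝ g q) (v : F × ℝ) :
    dirDeriv v (fun q => φ q.2 * g q) q = φ q.2 * dirDeriv v g q + φ' * v.2 * g q := by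
  have hφ' : HasFDerivAt (fun q : F × ℝ => φ q.2)
      (φ' • ContinuousLinearMap.snd ℝ F ℝ) q :=
    hφ.comp_hasFDerivAt q hasFDerivAt_snd
  rw [dirDeriv, (hφ'.fun_mul hg.hasFDerivAt).fderiv]
  simp only [add_apply, smul_apply, smul_eq_mul,
    ContinuousLinearMap.coe_snd', dirDeriv]
  ring

theorem hasDerivAt_slice {g : F × ℝ → ℝ} {p : F × ℝ} (hg : DifferentiableAt ℝ g p) :
    HasDerivAt (fun t => g (p.1, t)) (dirDeriv (0, 1) g p) p.2 :=
  hg.hasFDerivAt.comp_hasDerivAt p.2 ((hasDerivAt_const p.2 p.1).prodMk (hasDerivAt_id p.2))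

theorem tendsto_slice {X : Type*} [TopologicalSpace X] (p : X × ℝ) :
    Tendsto (fun t : ℝ => (p.1, t)) (𝓝 p.2) (𝓝 p) :=
  (continuous_const.prodMk continuous_id).tendsto' _ _ rfl

theorem hasDerivAt_slice_dirDeriv_mul_comp_fst {c : F → ℝ} {V : F × ℝ → ℝ} {p : F × ℝ}
    (hc : DifferentiableAt ℝ c p.1) (hV : ContDiffAt ℝ 3 V p) (u w : F) :
    HasDerivAt (fun t => dirDeriv (u, 0) (fun q => c q.1 * dirDeriv (w, 0) V q) (p.1, t))
      (dirDeriv (u, 0) (fun q => c q.1 * dirDeriv (w, 0) (dirDeriv (0, 1) V) q) p) p.2 := by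
  set G := dirDeriv (w, 0) V
  have hG : ContDiffAt ℝ 2 G p := hV.dirDeriv (by norm_num) _
  have hGu : ContDiffAt ℝ 1 (dirDeriv (u, 0) G) p := hG.dirDeriv (by norm_num) _
  -- `c` is only differentiable, so `∂ᵤ (c * G)` is differentiated along the vertical slice only,
  -- where the factor `fderiv ℝ c p.1 u` is constant.
  have hexpand : (fun t => dirDeriv (u, 0) (fun q => c q.1 * G q) (p.1, t)) =ᶠ[𝓝 p.2]
      fun t => fderiv ℝ c p.1 u * G (p.1, t) + c p.1 * dirDeriv (u, 0) G (p.1, t) := by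
    filter_upwards [(tendsto_slice p).eventually (hG.eventually (by simp))] with t ht
    exact dirDeriv_mul_comp_fst (q := (p.1, t)) hc (ht.differentiableAt (by norm_num)) u
  have hderiv := ((hasDerivAt_slice (hG.differentiableAt two_ne_zero)).const_mul
    (fderiv ℝ c p.1 u)).add
    ((hasDerivAt_slice (hGu.differentiableAt one_ne_zero)).const_mul (c p.1))
  refine (hderiv.congr_of_eventuallyEq hexpand).congr_deriv ?_
  have hVy : ContDiffAt ℝ 1 (dirDeriv (w, 0) (dirDeriv (0, 1) V)) p :=
    (hV.dirDeriv (m := 2) (by norm_num) _).dirDeriv (by norm_num) _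
  have hV2 : ContDiffAt ℝ 2 V p := hV.of_le (by norm_num)
  rw [dirDeriv_mul_comp_fst hc (hVy.differentiableAt one_ne_zero), dirDeriv_comm hV2,
    dirDeriv_comm hG, (dirDeriv_comm_eventuallyEq hV2 _ _).dirDeriv_eq]

variable {ι : Type*} [Fintype ι]

noncomputable def divForm (b : ι → ι → F → ℝ) (e : ι → F) (g : F × ℝ → ℝ) (q : F × ℝ) : ℝ :=
  ∑ i, ∑ j, dirDeriv (e i, 0) (fun q => b i j q.1 * dirDeriv (e j, 0) g q) q

theorem hasDerivAt_slice_divForm {b : ι → ι → F → ℝ} {V : F × ℝ → ℝ} {p : F × ℝ}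
    (hb : ∀ i j, DifferentiableAt ℝ (b i j) p.1) (e : ι → F) (hV : ContDiffAt ℝ 3 V p) :
    HasDerivAt (fun t => divForm b e V (p.1, t)) (divForm b e (dirDeriv (0, 1) V) p) p.2 :=
  HasDerivAt.fun_sum fun i _ => HasDerivAt.fun_sum fun j _ =>
    hasDerivAt_slice_dirDeriv_mul_comp_fst (hb i j) hV (e i) (e j)

theorem divForm_mul_comp_snd {b : ι → ι → F → ℝ} {φ : ℝ → ℝ} {g : F × ℝ → ℝ} {p : F × ℝ}
    (hb : ∀ i j, DifferentiableAt ℝ (b i j) p.1) (e : ι → F)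
    (hφ : ∀ᶠ y in 𝓝 p.2, DifferentiableAt ℝ φ y) (hg : ContDiffAt ℝ 2 g p) :
    divForm b e (fun q => φ q.2 * g q) p = φ p.2 * divForm b e g p := by
  have hφg (j : ι) : dirDeriv (e j, 0) (fun q => φ q.2 * g q) =ᶠ[𝓝 p]
      fun q => φ q.2 * dirDeriv (e j, 0) g q := by
    filter_upwards [continuous_snd.continuousAt.eventually hφ, hg.eventually (by simp)]
      with q hφq hgq
    simpa using dirDeriv_mul_comp_snd hφq.hasDerivAt (hgq.differentiableAt (by norm_num)) (e j, 0)
  have hterm (i j : ι) :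
      (fun q => b i j q.1 * dirDeriv (e j, 0) (fun q => φ q.2 * g q) q) =ᶠ[𝓝 p]
        fun q => φ q.2 * (b i j q.1 * dirDeriv (e j, 0) g q) := by
    filter_upwards [hφg j] with q hq
    rw [hq]
    ring
  have hbg (i j : ι) : DifferentiableAt ℝ (fun q => b i j q.1 * dirDeriv (e j, 0) g q) p :=
    ((hb i j).comp p differentiableAt_fst).mul
      ((hg.dirDeriv (m := 1) (by norm_num) _).differentiableAt one_ne_zero)
  simp only [divForm, Finset.mul_sum]
  refine Finset.sum_congr rfl fun i _ => Finset.sum_congr rfl fun j _ => ?_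
  rw [(hterm i j).dirDeriv_eq,
    dirDeriv_mul_comp_snd hφ.self_of_nhds.hasDerivAt (hbg i j)]
  simp

theorem dirDeriv_vert_rpow_mul_eventuallyEq {g : F × ℝ → ℝ} {p : F × ℝ} (hp : p.2 ≠ 0)
    (hg : ContDiffAt ℝ 1 g p) (a : ℝ) :
    dirDeriv (0, 1) (fun q => q.2 ^ a * g q) =ᶠ[𝓝 p]
      fun q => q.2 ^ a * dirDeriv (0, 1) g q + a * q.2 ^ (a - 1) * g q := by
  filter_upwards [continuous_snd.continuousAt.eventually (isOpen_ne.mem_nhds hp),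
    hg.eventually (by simp)] with q hq hgq
  simpa using dirDeriv_mul_comp_snd (Real.hasDerivAt_rpow_const (Or.inl hq))
    (hgq.differentiableAt one_ne_zero) (0, 1)

theorem dirDeriv_vert_rpow_mul {g : F × ℝ → ℝ} {p : F × ℝ} (hp : p.2 ≠ 0)
    (hg : ContDiffAt ℝ 1 g p) (a : ℝ) :
    dirDeriv (0, 1) (fun q => q.2 ^ a * g q) p =
      p.2 ^ a * (dirDeriv (0, 1) g p + a / p.2 * g p) := by
  rw [(dirDeriv_vert_rpow_mul_eventuallyEq hp hg a).self_of_nhds]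
  beta_reduce
  rw [Real.rpow_sub_one hp]
  ring

theorem dirDeriv_dirDeriv_vert_rpow_mul {g : F × ℝ → ℝ} {p : F × ℝ} (hp : p.2 ≠ 0)
    (hg : ContDiffAt ℝ 2 g p) (a : ℝ) :
    dirDeriv (0, 1) (dirDeriv (0, 1) (fun q => q.2 ^ a * g q)) p =
      p.2 ^ a * (dirDeriv (0, 1) (dirDeriv (0, 1) g) p + 2 * a / p.2 * dirDeriv (0, 1) g p
        + a * (a - 1) / p.2 ^ 2 * g p) := by
  have hgy : ContDiffAt ℝ 1 (dirDeriv (0, 1) g) p := hg.dirDeriv (by norm_num) _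
  have hφ : HasDerivAt (fun y => a * y ^ (a - 1)) (a * ((a - 1) * p.2 ^ (a - 1 - 1))) p.2 :=
    (Real.hasDerivAt_rpow_const (Or.inl hp)).const_mul a
  have hd₁ : DifferentiableAt ℝ (fun q : F × ℝ => q.2 ^ a * dirDeriv (0, 1) g q) p :=
    ((Real.differentiableAt_rpow_const_of_ne a hp).comp p differentiableAt_snd).mul
      (hgy.differentiableAt one_ne_zero)
  have hd₂ : DifferentiableAt ℝ (fun q : F × ℝ => a * q.2 ^ (a - 1) * g q) p :=
    (hφ.differentiableAt.comp p differentiableAt_snd).mul (hg.differentiableAt two_ne_zero)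
  have h₂ := dirDeriv_mul_comp_snd hφ (hg.differentiableAt two_ne_zero) (0, 1)
  rw [(dirDeriv_vert_rpow_mul_eventuallyEq hp (hg.of_le one_le_two) a).dirDeriv_eq,
    dirDeriv_add hd₁ hd₂, dirDeriv_vert_rpow_mul hp hgy]
  simp only at h₂
  rw [h₂, Real.rpow_sub_one hp (a - 1), Real.rpow_sub_one hp a]
  field_simp
  ring

theorem dirDeriv_vert_equation {a : ℝ} {Ω : Set (F × ℝ)} (hΩ : IsOpen Ω)
    {b : ι → ι → F → ℝ} (hb : ∀ i j, Differentiable ℝ (b i j)) {e : ι → F} {f : F → ℝ}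
    {V : F × ℝ → ℝ} (hV : ContDiffOn ℝ 3 V Ω)
    (hPDE : ∀ q ∈ Ω, divForm b e V q + dirDeriv (0, 1) (dirDeriv (0, 1) V) q
      + a / q.2 * dirDeriv (0, 1) V q = f q.1)
    {p : F × ℝ} (hp : p ∈ Ω) (hp₂ : p.2 ≠ 0) :
    divForm b e (dirDeriv (0, 1) V) p + dirDeriv (0, 1) (dirDeriv (0, 1) (dirDeriv (0, 1) V)) p
      + a / p.2 * dirDeriv (0, 1) (dirDeriv (0, 1) V) p - a / p.2 ^ 2 * dirDeriv (0, 1) V p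
      = 0 := by
  have hVp : ContDiffAt ℝ 3 V p := hV.contDiffAt (hΩ.mem_nhds hp)
  have hVy : ContDiffAt ℝ 2 (dirDeriv (0, 1) V) p := hVp.dirDeriv (by norm_num) _
  have hVyy : ContDiffAt ℝ 1 (dirDeriv (0, 1) (dirDeriv (0, 1) V)) p :=
    hVy.dirDeriv (by norm_num) _
  have hslice := ((hasDerivAt_slice_divForm (fun i j => (hb i j) p.1) e hVp).add
    (hasDerivAt_slice (hVyy.differentiableAt one_ne_zero))).add
    (((hasDerivAt_const p.2 a).div (hasDerivAt_id p.2) hp₂).mul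
      (hasDerivAt_slice (hVy.differentiableAt two_ne_zero)))
  have hconst : (fun t => divForm b e V (p.1, t) + dirDeriv (0, 1) (dirDeriv (0, 1) V) (p.1, t)
      + a / t * dirDeriv (0, 1) V (p.1, t)) =ᶠ[𝓝 p.2] fun _ => f p.1 := by
    filter_upwards [(tendsto_slice p).eventually (hΩ.mem_nhds hp)] with t ht
    exact hPDE _ ht
  have h := hslice.unique ((hasDerivAt_const p.2 (f p.1)).congr_of_eventuallyEq hconst)
  simp only [id, Pi.div_apply, Prod.mk.eta] at h
  linear_combination h

theorem conjugate_equation {a : ℝ} {Ω : Set (F × ℝ)} (hΩ : IsOpen Ω) (hΩ₂ : ∀ p ∈ Ω, p.2 ≠ 0)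
    {b : ι → ι → F → ℝ} (hb : ∀ i j, Differentiable ℝ (b i j)) {e : ι → F} {f : F → ℝ}
    {V : F × ℝ → ℝ} (hV : ContDiffOn ℝ 3 V Ω)
    (hPDE : ∀ q ∈ Ω, divForm b e V q + dirDeriv (0, 1) (dirDeriv (0, 1) V) q
      + a / q.2 * dirDeriv (0, 1) V q = f q.1)
    {p : F × ℝ} (hp : p ∈ Ω) :
    divForm b e (fun q => q.2 ^ a * dirDeriv (0, 1) V q) p
      + dirDeriv (0, 1) (dirDeriv (0, 1) (fun q => q.2 ^ a * dirDeriv (0, 1) V q)) p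
      - a / p.2 * dirDeriv (0, 1) (fun q => q.2 ^ a * dirDeriv (0, 1) V q) p = 0 := by
  have hp₂ := hΩ₂ p hp
  have hVy : ContDiffAt ℝ 2 (dirDeriv (0, 1) V) p :=
    (hV.contDiffAt (hΩ.mem_nhds hp)).dirDeriv (by norm_num) _
  have hrpow : ∀ᶠ y in 𝓝 p.2, DifferentiableAt ℝ (fun y : ℝ => y ^ a) y :=
    eventually_of_mem (isOpen_ne.mem_nhds hp₂) fun y hy =>
      Real.differentiableAt_rpow_const_of_ne a hy
  rw [divForm_mul_comp_snd (fun i j => (hb i j) p.1) e hrpow hVy,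
    dirDeriv_dirDeriv_vert_rpow_mul hp₂ hVy, dirDeriv_vert_rpow_mul hp₂ (hVy.of_le one_le_two)]
  linear_combination p.2 ^ a * dirDeriv_vert_equation hΩ hb hV hPDE hp hp₂

end HalfSpace

theorem statement8_general (n : ℕ) (a : ℝ)
    (Ω : Set (EuclideanSpace ℝ (Fin n) × ℝ)) (hΩopen : IsOpen Ω)
    (hΩup : ∀ p ∈ Ω, 0 < p.2)
    (b : Fin n → Fin n → EuclideanSpace ℝ (Fin n) → ℝ)
    (hbC1 : ∀ i j, ContDiff ℝ 1 (b i j))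
    (f : EuclideanSpace ℝ (Fin n) → ℝ)
    (V : EuclideanSpace ℝ (Fin n) × ℝ → ℝ)
    (hV : ContDiffOn ℝ 3 V Ω)
    (hPDE : ∀ p ∈ Ω,
      (∑ i : Fin n, ∑ j : Fin n,
          fderiv ℝ
            (fun q : EuclideanSpace ℝ (Fin n) × ℝ =>
              b i j q.1 *
                fderiv ℝ V q ((EuclideanSpace.single j (1 : ℝ)), (0 : ℝ))) p
            ((EuclideanSpace.single i (1 : ℝ)), (0 : ℝ)))
        + fderiv ℝ
            (fun q : EuclideanSpace ℝ (Fin n) × ℝ =>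
              fderiv ℝ V q ((0 : EuclideanSpace ℝ (Fin n)), (1 : ℝ))) p
            ((0 : EuclideanSpace ℝ (Fin n)), (1 : ℝ))
        + (a / p.2) * fderiv ℝ V p ((0 : EuclideanSpace ℝ (Fin n)), (1 : ℝ))
      = f p.1) :
    ∀ p ∈ Ω,
      (∑ i : Fin n, ∑ j : Fin n,
          fderiv ℝ
            (fun q : EuclideanSpace ℝ (Fin n) × ℝ =>
              b i j q.1 *
                fderiv ℝ
                  (fun q' : EuclideanSpace ℝ (Fin n) × ℝ =>
                    q'.2 ^ a *
                      fderiv ℝ V q' ((0 : EuclideanSpace ℝ (Fin n)), (1 : ℝ))) q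
                  ((EuclideanSpace.single j (1 : ℝ)), (0 : ℝ))) p
            ((EuclideanSpace.single i (1 : ℝ)), (0 : ℝ)))
        + fderiv ℝ
            (fun q : EuclideanSpace ℝ (Fin n) × ℝ =>
              fderiv ℝ
                (fun q' : EuclideanSpace ℝ (Fin n) × ℝ =>
                  q'.2 ^ a *
                    fderiv ℝ V q' ((0 : EuclideanSpace ℝ (Fin n)), (1 : ℝ))) q
                ((0 : EuclideanSpace ℝ (Fin n)), (1 : ℝ))) p
            ((0 : EuclideanSpace ℝ (Fin n)), (1 : ℝ))
        - (a / p.2) *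
            fderiv ℝ
              (fun q' : EuclideanSpace ℝ (Fin n) × ℝ =>
                q'.2 ^ a *
                  fderiv ℝ V q' ((0 : EuclideanSpace ℝ (Fin n)), (1 : ℝ))) p
              ((0 : EuclideanSpace ℝ (Fin n)), (1 : ℝ))
      = 0 := by
  intro p hp
  exact conjugate_equation (e := fun j => EuclideanSpace.single j 1) hΩopen
    (fun q hq => (hΩup q hq).ne') (fun i j => (hbC1 i j).differentiable one_ne_zero) hV hPDE hp

/-- **Conjugation principle (pointwise form).** If `V` is `C³` on an open
`Ω ⊆ ℝⁿ × (0,∞)` and satisfies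
`Σ_{i,j} ∂_{x_i}(b_{ij}(x) ∂_{x_j}V) + ∂_{yy}V + (a/y)∂_y V = f(x)` on `Ω`, where the
`b_{ij}` are symmetric `C¹` functions of `x`, then `w = y^a ∂_y V` satisfies
`Σ_{i,j} ∂_{x_i}(b_{ij}(x) ∂_{x_j}w) + ∂_{yy}w − (a/y)∂_y w = 0` on `Ω`.
Here `∂_{x_i}g(p) = fderiv ℝ g p (eᵢ, 0)` and `∂_y g(p) = fderiv ℝ g p (0, 1)`. -/
theorem statement8 (n : ℕ) (hn : 1 ≤ n) (a : ℝ) (ha : a ∈ Set.Ioo (-1 : ℝ) 1)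
    (Ω : Set (EuclideanSpace ℝ (Fin n) × ℝ)) (hΩopen : IsOpen Ω)
    (hΩup : ∀ p ∈ Ω, 0 < p.2)
    (b : Fin n → Fin n → EuclideanSpace ℝ (Fin n) → ℝ)
    (hbC1 : ∀ i j, ContDiff ℝ 1 (b i j))
    (hbsym : ∀ i j, b i j = b j i)
    (f : EuclideanSpace ℝ (Fin n) → ℝ)
    (V : EuclideanSpace ℝ (Fin n) × ℝ → ℝ)
    (hV : ContDiffOn ℝ 3 V Ω)
    (hPDE : ∀ p ∈ Ω,
      (∑ i : Fin n, ∑ j : Fin n,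
          fderiv ℝ
            (fun q : EuclideanSpace ℝ (Fin n) × ℝ =>
              b i j q.1 *
                fderiv ℝ V q ((EuclideanSpace.single j (1 : ℝ)), (0 : ℝ))) p
            ((EuclideanSpace.single i (1 : ℝ)), (0 : ℝ)))
        + fderiv ℝ
            (fun q : EuclideanSpace ℝ (Fin n) × ℝ =>
              fderiv ℝ V q ((0 : EuclideanSpace ℝ (Fin n)), (1 : ℝ))) p
            ((0 : EuclideanSpace ℝ (Fin n)), (1 : ℝ))
        + (a / p.2) * fderiv ℝ V p ((0 : EuclideanSpace ℝ (Fin n)), (1 : ℝ))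
      = f p.1) :
    ∀ p ∈ Ω,
      (∑ i : Fin n, ∑ j : Fin n,
          fderiv ℝ
            (fun q : EuclideanSpace ℝ (Fin n) × ℝ =>
              b i j q.1 *
                fderiv ℝ
                  (fun q' : EuclideanSpace ℝ (Fin n) × ℝ =>
                    q'.2 ^ a *
                      fderiv ℝ V q' ((0 : EuclideanSpace ℝ (Fin n)), (1 : ℝ))) q
                  ((EuclideanSpace.single j (1 : ℝ)), (0 : ℝ))) p
            ((EuclideanSpace.single i (1 : ℝ)), (0 : ℝ)))
        + fderiv ℝ
            (fun q : EuclideanSpace ℝ (Fin n) × ℝ =>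
              fderiv ℝ
                (fun q' : EuclideanSpace ℝ (Fin n) × ℝ =>
                  q'.2 ^ a *
                    fderiv ℝ V q' ((0 : EuclideanSpace ℝ (Fin n)), (1 : ℝ))) q
                ((0 : EuclideanSpace ℝ (Fin n)), (1 : ℝ))) p
            ((0 : EuclideanSpace ℝ (Fin n)), (1 : ℝ))
        - (a / p.2) *
            fderiv ℝ
              (fun q' : EuclideanSpace ℝ (Fin n) × ℝ =>
                q'.2 ^ a *
                  fderiv ℝ V q' ((0 : EuclideanSpace ℝ (Fin n)), (1 : ℝ))) p
              ((0 : EuclideanSpace ℝ (Fin n)), (1 : ℝ))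
      = 0 :=
  statement8_general n a Ω hΩopen hΩup b hbC1 f V hV hPDE
end

section
/- Let n ≥ 1 be an integer and a ∈ ℝ. Define G : ℝ^{n+1} \ {0} → ℝ by G(X) = |X|^{−(n−1+a)}, where X = (x,y) ∈ ℝⁿ × ℝ and |X| = (|x|² + y²)^{1/2}. Then at every point X = (x,y) with X ≠ 0 and y ≠ 0 one has ΔG(X) + (a/y) ∂_y G(X) = 0; equivalently, the vector field X ↦ |y|^a ∇G(X) has vanishing divergence at every such point. -/
/-!
Write `G = Q ^ c` with `Q(x, y) = ‖x‖² + y²` and `2c = -(n - 1 + a)`. The second derivative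
along a direction `v` is `2c Q^(c-1) |v|² + 4c(c-1) Q^(c-2) ⟨X, v⟩²`, so summing over an
orthonormal frame of `ℝⁿ × ℝ` (Parseval) gives `ΔG = 2c Q^(c-1) (n + 1 + 2(c - 1))`, while the
drift term is `(a/y) ∂_y G = 2ac Q^(c-1)`. The total `2c Q^(c-1) (n - 1 + a + 2c)` vanishes.
-/

open scoped RealInnerProductSpace

namespace ProdEuclidean

variable {E : Type*} [NormedAddCommGroup E]

/- `E × ℝ` carries the sup norm, so the Euclidean structure of `ℝⁿ × ℝ` is spelled out by hand. -/
noncomputable def normSq (p : E × ℝ) : ℝ := ‖p.1‖ ^ 2 + p.2 ^ 2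

lemma normSq_pos_of_snd_ne_zero {p : E × ℝ} (hp : p.2 ≠ 0) : 0 < normSq p := by
  unfold normSq; positivity

lemma continuous_normSq : Continuous (normSq : E × ℝ → ℝ) := by
  unfold normSq; fun_prop

variable [InnerProductSpace ℝ E]

noncomputable def innerSL (p : E × ℝ) : E × ℝ →L[ℝ] ℝ :=
  (_root_.innerSL ℝ p.1).comp (ContinuousLinearMap.fst ℝ E ℝ) +
    p.2 • ContinuousLinearMap.snd ℝ E ℝ

@[simp]
lemma innerSL_apply (p v : E × ℝ) : innerSL p v = ⟪p.1, v.1⟫ + p.2 * v.2 := by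
  simp [innerSL]

lemma innerSL_comm (p v : E × ℝ) : innerSL p v = innerSL v p := by
  simp only [innerSL_apply, real_inner_comm, mul_comm]

lemma innerSL_self (p : E × ℝ) : innerSL p p = normSq p := by
  simp [normSq, sq]

lemma hasFDerivAt_normSq (p : E × ℝ) : HasFDerivAt normSq ((2 : ℝ) • innerSL p) p := by
  have hfst := (hasFDerivAt_fst (𝕜 := ℝ) (p := p)).norm_sq
  have hsnd := (hasFDerivAt_snd (𝕜 := ℝ) (p := p)).pow 2
  refine (hfst.add hsnd).congr_fderiv (ContinuousLinearMap.ext fun v => ?_)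
  simp only [Nat.add_one_sub_one, pow_one, nsmul_eq_mul, Nat.cast_ofNat, add_apply, smul_apply,
    ContinuousLinearMap.comp_apply, ContinuousLinearMap.coe_fst', coe_innerSL_apply,
    ContinuousLinearMap.coe_snd', smul_eq_mul, innerSL_apply]
  ring

lemma hasFDerivAt_normSq_rpow (c : ℝ) {p : E × ℝ} (hp : normSq p ≠ 0) :
    HasFDerivAt (fun q => normSq q ^ c) ((2 * c * normSq p ^ (c - 1)) • innerSL p) p := by
  refine ((hasFDerivAt_normSq p).rpow_const (Or.inl hp)).congr_fderiv ?_
  rw [smul_smul]; ring_nf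

lemma fderiv_normSq_rpow_apply (c : ℝ) {q : E × ℝ} (hq : normSq q ≠ 0) (v : E × ℝ) :
    fderiv ℝ (fun r => normSq r ^ c) q v = 2 * c * normSq q ^ (c - 1) * innerSL v q := by
  simp [(hasFDerivAt_normSq_rpow c hq).fderiv, innerSL_comm q v]

lemma fderiv_fderiv_normSq_rpow_apply (c : ℝ) {p : E × ℝ} (hp : normSq p ≠ 0) (v : E × ℝ) :
    fderiv ℝ (fun q => fderiv ℝ (fun r => normSq r ^ c) q v) p v
      = 2 * c * normSq p ^ (c - 1) * normSq v
        + 4 * c * (c - 1) * normSq p ^ (c - 2) * innerSL p v ^ 2 := by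
  have hfirst : (fun q => fderiv ℝ (fun r => normSq r ^ c) q v)
      =ᶠ[nhds p] fun q => 2 * c * normSq q ^ (c - 1) * innerSL v q := by
    filter_upwards [(isOpen_compl_singleton.preimage continuous_normSq).mem_nhds hp] with q hq
    exact fderiv_normSq_rpow_apply c hq v
  have hfactor : HasFDerivAt (fun q => 2 * c * normSq q ^ (c - 1) * innerSL v q) _ p :=
    ((hasFDerivAt_normSq_rpow (c - 1) hp).const_mul (2 * c)).mul (innerSL v).hasFDerivAt
  rw [hfirst.fderiv_eq, hfactor.fderiv]
  simp only [add_apply, FunLike.coe_smul, Pi.smul_apply, smul_eq_mul]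
  rw [innerSL_comm v p, innerSL_self, show c - 1 - 1 = c - 2 by ring]
  ring

theorem sum_fderiv_fderiv_normSq_rpow_add_drift_eq_zero {ι : Type*} [Fintype ι]
    (b : OrthonormalBasis ι ℝ E) {a c : ℝ} (hc : 2 * c = -((Fintype.card ι : ℝ) - 1 + a))
    (x : E) {y : ℝ} (hy : y ≠ 0) :
    (∑ i, fderiv ℝ (fun q => fderiv ℝ (fun r => normSq r ^ c) q (b i, 0)) (x, y) (b i, 0))
      + fderiv ℝ (fun q => fderiv ℝ (fun r => normSq r ^ c) q (0, 1)) (x, y) (0, 1)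
      + (a / y) * fderiv ℝ (fun r => normSq r ^ c) (x, y) (0, 1) = 0 := by
  have hN : normSq (x, y) ≠ 0 := (normSq_pos_of_snd_ne_zero hy).ne'
  have hpow : normSq (x, y) ^ (c - 1) = normSq (x, y) ^ (c - 2) * normSq (x, y) := by
    rw [show c - 1 = c - 2 + 1 by ring, Real.rpow_add_one hN]
  simp only [fderiv_fderiv_normSq_rpow_apply c hN, fderiv_normSq_rpow_apply c hN, innerSL_apply]
  have hframe (i : ι) : normSq (b i, (0 : ℝ)) = 1 := by simp [normSq, b.orthonormal.1 i]
  have hvert : normSq ((0 : E), (1 : ℝ)) = 1 := by simp [normSq]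
  simp only [hframe, hvert, inner_zero_left, inner_zero_right, mul_zero, mul_one, one_mul,
    add_zero, zero_add, Finset.sum_add_distrib, Finset.sum_const, Finset.card_univ, nsmul_eq_mul,
    ← Finset.mul_sum, b.sum_sq_inner_left, hpow]
  field_simp
  rw [show normSq (x, y) = ‖x‖ ^ 2 + y ^ 2 from rfl]
  linear_combination (2 * c * (‖x‖ ^ 2 + y ^ 2) ^ (c - 2) * (‖x‖ ^ 2 + y ^ 2)) * hc

end ProdEuclidean

open ProdEuclidean in
theorem statement9_general (n : ℕ) (a : ℝ) :
    ∀ (x : EuclideanSpace ℝ (Fin n)) (y : ℝ),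
      (x, y) ≠ ((0 : EuclideanSpace ℝ (Fin n)), (0 : ℝ)) → y ≠ 0 →
      (∑ i : Fin n,
          fderiv ℝ
            (fun q : EuclideanSpace ℝ (Fin n) × ℝ =>
              fderiv ℝ
                (fun p : EuclideanSpace ℝ (Fin n) × ℝ =>
                  Real.sqrt (‖p.1‖ ^ 2 + p.2 ^ 2) ^ (-((n : ℝ) - 1 + a))) q
                ((EuclideanSpace.single i (1 : ℝ)), (0 : ℝ))) (x, y)
            ((EuclideanSpace.single i (1 : ℝ)), (0 : ℝ)))
        + fderiv ℝ
            (fun q : EuclideanSpace ℝ (Fin n) × ℝ =>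
              fderiv ℝ
                (fun p : EuclideanSpace ℝ (Fin n) × ℝ =>
                  Real.sqrt (‖p.1‖ ^ 2 + p.2 ^ 2) ^ (-((n : ℝ) - 1 + a))) q
                ((0 : EuclideanSpace ℝ (Fin n)), (1 : ℝ))) (x, y)
            ((0 : EuclideanSpace ℝ (Fin n)), (1 : ℝ))
        + (a / y) *
            fderiv ℝ
              (fun p : EuclideanSpace ℝ (Fin n) × ℝ =>
                Real.sqrt (‖p.1‖ ^ 2 + p.2 ^ 2) ^ (-((n : ℝ) - 1 + a))) (x, y)
              ((0 : EuclideanSpace ℝ (Fin n)), (1 : ℝ))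
      = 0 := by
  intro x y _ hy
  have hG : (fun p : EuclideanSpace ℝ (Fin n) × ℝ =>
      Real.sqrt (‖p.1‖ ^ 2 + p.2 ^ 2) ^ (-((n : ℝ) - 1 + a)))
      = fun p => normSq p ^ (-((n : ℝ) - 1 + a) / 2) := by
    funext p
    rw [normSq, Real.rpow_div_two_eq_sqrt _ (by positivity)]
  have key := sum_fderiv_fderiv_normSq_rpow_add_drift_eq_zero (EuclideanSpace.basisFun (Fin n) ℝ)
    (a := a) (c := -((n : ℝ) - 1 + a) / 2) (by rw [Fintype.card_fin]; ring) x hy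
  simp only [EuclideanSpace.basisFun_apply] at key
  simpa only [hG] using key

/-- Let `n ≥ 1` and `a : ℝ`. Define `G : ℝ^{n+1} \ {0} → ℝ` by `G(X) = |X|^{−(n−1+a)}`
with `X = (x,y)` and `|X| = (|x|² + y²)^{1/2}`. Then at every `X = (x,y)` with `X ≠ 0`
and `y ≠ 0` one has `ΔG(X) + (a/y) ∂_y G(X) = 0`. Here the Laplacian is
`ΔG = Σᵢ ∂_{x_i}∂_{x_i} G + ∂_y ∂_y G`, with partial derivatives expressed through
`fderiv`. -/
theorem statement9 (n : ℕ) (hn : 1 ≤ n) (a : ℝ) :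
    ∀ (x : EuclideanSpace ℝ (Fin n)) (y : ℝ),
      (x, y) ≠ ((0 : EuclideanSpace ℝ (Fin n)), (0 : ℝ)) → y ≠ 0 →
      (∑ i : Fin n,
          fderiv ℝ
            (fun q : EuclideanSpace ℝ (Fin n) × ℝ =>
              fderiv ℝ
                (fun p : EuclideanSpace ℝ (Fin n) × ℝ =>
                  Real.sqrt (‖p.1‖ ^ 2 + p.2 ^ 2) ^ (-((n : ℝ) - 1 + a))) q
                ((EuclideanSpace.single i (1 : ℝ)), (0 : ℝ))) (x, y)
            ((EuclideanSpace.single i (1 : ℝ)), (0 : ℝ)))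
        + fderiv ℝ
            (fun q : EuclideanSpace ℝ (Fin n) × ℝ =>
              fderiv ℝ
                (fun p : EuclideanSpace ℝ (Fin n) × ℝ =>
                  Real.sqrt (‖p.1‖ ^ 2 + p.2 ^ 2) ^ (-((n : ℝ) - 1 + a))) q
                ((0 : EuclideanSpace ℝ (Fin n)), (1 : ℝ))) (x, y)
            ((0 : EuclideanSpace ℝ (Fin n)), (1 : ℝ))
        + (a / y) *
            fderiv ℝ
              (fun p : EuclideanSpace ℝ (Fin n) × ℝ =>
                Real.sqrt (‖p.1‖ ^ 2 + p.2 ^ 2) ^ (-((n : ℝ) - 1 + a))) (x, y)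
              ((0 : EuclideanSpace ℝ (Fin n)), (1 : ℝ))
      = 0 :=
  statement9_general n a
end
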